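/- arXiv:2006.16438 — 6 statements merged into one kernel-verified Lean document; each statement's English description precedes it below -/
import Mathlib

section
/- Let Z = A_d ⊙ ⋯ ⊙ A_1 ∈ ℝ^{N×r} be a Khatri-Rao product of matrices A_k ∈ ℝ^{n_k×r}, and suppose Z and each A_k have full column rank. For every row index i ∈ [N] with corresponding multi-index (i_1,…,i_d), the leverage score of row i of Z is bounded by the product of the leverage scores of the corresponding factor rows: ℓ_i(Z) ≤ ∏_{k=1}^d ℓ_{i_k}(A_k). -/
open scoped Classical
open Matrix

/-- The leverage score of row `i` of a matrix `Z` with full column rank: the `i`-th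
diagonal entry of the orthogonal projector `Z (Zᵀ Z)⁻¹ Zᵀ` onto the column space of `Z`,
which equals `‖Q(i,:)‖₂²` for any orthonormal basis `Q` of the column space of `Z`. -/
noncomputable def leverageScore {m r : Type*} [Fintype m] [Fintype r] [DecidableEq r]
    (Z : Matrix m r ℝ) (i : m) : ℝ :=
  (Z * (Zᵀ * Z)⁻¹ * Zᵀ) i i

/-- The Khatri–Rao product `Z = A_d ⊙ ⋯ ⊙ A_1 ∈ ℝ^{N×r}` of matrices
`A_k ∈ ℝ^{n_k×r}`: rows are indexed by multi-indices `(i_1,…,i_d)` (in bijection with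
the linear indices `i ∈ [N]`, `N = ∏ n_k`), with `Z(i,:)` the entrywise (Hadamard)
product of the rows `A_k(i_k,:)`. -/
def krp {d r : ℕ} {n : Fin d → ℕ} (A : ∀ k, Matrix (Fin (n k)) (Fin r) ℝ) :
    Matrix (∀ k, Fin (n k)) (Fin r) ℝ :=
  Matrix.of fun i j => ∏ k, A k (i k) j


lemma isUnit_gram {m : Type*} [Fintype m] {r : ℕ} (M : Matrix m (Fin r) ℝ)
    (h : M.rank = r) : IsUnit (Mᵀ * M) := by
  have h2 : (Mᵀ * M).rank = r := by rw [Matrix.rank_transpose_mul_self, h]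
  rw [← Matrix.mulVec_surjective_iff_isUnit]
  have hr : LinearMap.range (Mᵀ * M).mulVecLin = ⊤ := by
    apply Submodule.eq_top_of_finrank_eq
    rw [Module.finrank_fintype_fun_eq_card, Fintype.card_fin]
    exact h2
  intro v
  obtain ⟨w, hw⟩ := LinearMap.range_eq_top.mp hr v
  exact ⟨w, hw⟩

section proj
variable {m : Type*} [Fintype m] [DecidableEq m] {r : ℕ}
variable (M : Matrix m (Fin r) ℝ)

noncomputable def proj : Matrix m m ℝ := M * (Mᵀ * M)⁻¹ * Mᵀ

variable {M}

lemma proj_symm (hM : IsUnit (Mᵀ * M)) : (proj M)ᵀ = proj M := by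
  have hG : ((Mᵀ * M)⁻¹)ᵀ = (Mᵀ * M)⁻¹ := by
    rw [Matrix.transpose_nonsing_inv, Matrix.transpose_mul, Matrix.transpose_transpose]
  simp [proj, Matrix.transpose_mul, hG, Matrix.mul_assoc]

lemma transpose_mul_proj (hM : IsUnit (Mᵀ * M)) : Mᵀ * proj M = Mᵀ := by
  have hdet : IsUnit (Mᵀ * M).det := (Matrix.isUnit_iff_isUnit_det _).mp hM
  calc Mᵀ * (M * (Mᵀ * M)⁻¹ * Mᵀ) = (Mᵀ * M) * (Mᵀ * M)⁻¹ * Mᵀ := by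
        rw [Matrix.mul_assoc, Matrix.mul_assoc, Matrix.mul_assoc]
    _ = Mᵀ := by rw [Matrix.mul_nonsing_inv _ hdet, Matrix.one_mul]

lemma proj_idem (hM : IsUnit (Mᵀ * M)) : proj M * proj M = proj M := by
  calc proj M * proj M = M * (Mᵀ * M)⁻¹ * (Mᵀ * proj M) := by
        rw [proj, Matrix.mul_assoc (M * (Mᵀ * M)⁻¹)]
    _ = proj M := by rw [transpose_mul_proj hM, proj]

lemma lev_eq_diag (i : m) : leverageScore M i = proj M i i := rfl

lemma diag_eq_single (B : Matrix m m ℝ) (i : m) :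
    B i i = Pi.single i 1 ⬝ᵥ (B *ᵥ Pi.single i 1) := by
  simp [Matrix.mulVec_single, single_dotProduct]

lemma mulVec_proj_dot (hM : IsUnit (Mᵀ * M)) (x y : m → ℝ) :
    (proj M *ᵥ x) ⬝ᵥ (proj M *ᵥ y) = x ⬝ᵥ (proj M *ᵥ y) := by
  have h1 : proj M *ᵥ x = x ᵥ* proj M := by
    conv_lhs => rw [← proj_symm hM]
    rw [Matrix.mulVec_transpose]
  rw [h1, Matrix.dotProduct_mulVec, Matrix.vecMul_vecMul, proj_idem hM,
    ← Matrix.dotProduct_mulVec]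

lemma lev_eq_norm (hM : IsUnit (Mᵀ * M)) (i : m) :
    leverageScore M i = (proj M *ᵥ Pi.single i 1) ⬝ᵥ (proj M *ᵥ Pi.single i 1) := by
  rw [mulVec_proj_dot hM, lev_eq_diag, diag_eq_single (proj M) i]

lemma proj_dot_le (hM : IsUnit (Mᵀ * M)) (x : m → ℝ) :
    x ⬝ᵥ (proj M *ᵥ x) ≤ x ⬝ᵥ x := by
  have h0 : 0 ≤ (x - proj M *ᵥ x) ⬝ᵥ (x - proj M *ᵥ x) :=
    Finset.sum_nonneg fun j _ => mul_self_nonneg _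
  have hpp := mulVec_proj_dot hM x x
  have hcomm : (proj M *ᵥ x) ⬝ᵥ x = x ⬝ᵥ (proj M *ᵥ x) := dotProduct_comm _ _
  have hexp : (x - proj M *ᵥ x) ⬝ᵥ (x - proj M *ᵥ x)
      = x ⬝ᵥ x - x ⬝ᵥ (proj M *ᵥ x) := by
    rw [sub_dotProduct, dotProduct_sub, dotProduct_sub, hpp, hcomm]
    ring
  linarith [hexp ▸ h0]

/-- min-norm characterization bound -/
lemma lev_le_of_solution (hM : IsUnit (Mᵀ * M)) (i : m) (x : m → ℝ)
    (hx : Mᵀ *ᵥ x = Mᵀ *ᵥ Pi.single i 1) :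
    leverageScore M i ≤ x ⬝ᵥ x := by
  have hPe : proj M *ᵥ Pi.single i 1 = proj M *ᵥ x := by
    show (M * (Mᵀ * M)⁻¹ * Mᵀ) *ᵥ _ = (M * (Mᵀ * M)⁻¹ * Mᵀ) *ᵥ _
    simp only [← Matrix.mulVec_mulVec]
    rw [hx]
  calc leverageScore M i
      = (proj M *ᵥ Pi.single i 1) ⬝ᵥ (proj M *ᵥ Pi.single i 1) := lev_eq_norm hM i
    _ = (proj M *ᵥ x) ⬝ᵥ (proj M *ᵥ x) := by rw [hPe]
    _ = x ⬝ᵥ (proj M *ᵥ x) := mulVec_proj_dot hM x x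
    _ ≤ x ⬝ᵥ x := proj_dot_le hM x

end proj

/-- Leverage score bound for a Khatri–Rao product: if `Z = A_d ⊙ ⋯ ⊙ A_1`
and `Z` and each `A_k` have full column rank, then for every row (multi-)index `i`,
`ℓ_i(Z) ≤ ∏_{k=1}^d ℓ_{i_k}(A_k)`. -/
theorem statement3 (d r : ℕ) (n : Fin d → ℕ)
    (A : ∀ k, Matrix (Fin (n k)) (Fin r) ℝ)
    (hA : ∀ k, (A k).rank = r)
    (Z : Matrix (∀ k, Fin (n k)) (Fin r) ℝ) (hZ : Z = krp A)
    (hZrank : Z.rank = r) :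
    ∀ i : ∀ k, Fin (n k),
      leverageScore Z i ≤ ∏ k, leverageScore (A k) (i k) := by
  intro i
  have hAunit : ∀ k, IsUnit ((A k)ᵀ * A k) := fun k => isUnit_gram _ (hA k)
  have hZunit : IsUnit (Zᵀ * Z) := isUnit_gram _ hZrank
  set u : ∀ k, Fin (n k) → ℝ := fun k => proj (A k) *ᵥ Pi.single (i k) 1 with hu
  set x : (∀ k, Fin (n k)) → ℝ := fun i' => ∏ k, u k (i' k) with hxdef
  have fub : ∀ (f : ∀ k, Fin (n k) → ℝ),
      ∑ i' : (∀ k, Fin (n k)), ∏ k, f k (i' k) = ∏ k, ∑ p, f k p := by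
    intro f
    rw [Finset.prod_univ_sum, Fintype.piFinset_univ]
  have hkey : ∀ k, (A k)ᵀ *ᵥ u k = (A k)ᵀ *ᵥ Pi.single (i k) 1 := by
    intro k
    rw [hu]
    dsimp only
    rw [Matrix.mulVec_mulVec, transpose_mul_proj (hAunit k)]
  have hsolve : Zᵀ *ᵥ x = Zᵀ *ᵥ Pi.single i 1 := by
    funext j
    have lhs : (Zᵀ *ᵥ x) j = ∏ k, ((A k)ᵀ *ᵥ u k) j := by
      simp only [Matrix.mulVec, dotProduct, Matrix.transpose_apply, hZ, krp, Matrix.of_apply,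
        hxdef]
      rw [← fub fun k p => A k p j * u k p]
      exact Finset.sum_congr rfl fun i' _ => (Finset.prod_mul_distrib).symm
    have rhs : (Zᵀ *ᵥ Pi.single i 1) j = ∏ k, ((A k)ᵀ *ᵥ Pi.single (i k) 1) j := by
      simp [Matrix.mulVec_single, hZ, krp]
    rw [lhs, rhs]
    exact Finset.prod_congr rfl fun k _ => by rw [hkey k]
  have hxx : x ⬝ᵥ x = ∏ k, (u k ⬝ᵥ u k) := by
    simp only [dotProduct, hxdef]
    rw [← fub fun k p => u k p * u k p]
    exact Finset.sum_congr rfl fun i' _ => (Finset.prod_mul_distrib).symm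
  calc leverageScore Z i ≤ x ⬝ᵥ x := lev_le_of_solution hZunit i x hsolve
    _ = ∏ k, (u k ⬝ᵥ u k) := hxx
    _ = ∏ k, leverageScore (A k) (i k) := by
        exact Finset.prod_congr rfl fun k _ => (lev_eq_norm (hAunit k) (i k)).symm
end

section
/- Consider the overdetermined least squares problem with design matrix A ∈ ℝ^{n×d}, n > d, rank(A) = d, right-hand side b ∈ ℝ^n, optimal solution x_opt, and optimal residual R² = min_x ‖Ax − b‖₂². Let S ∈ ℝ^{s×n} satisfy the structural conditions SC1: σ_min²(S U_A) ≥ 1/√2, and SC2: ‖U_Aᵀ Sᵀ S b⊥‖₂² ≤ ε R²/2, for some ε ∈ (0,1). Then the sketched solution x̃_opt = argmin_x ‖SAx − Sb‖₂² satisfies ‖A x̃_opt − b‖₂² ≤ (1 + ε) ‖A x_opt − b‖₂² and ‖x_opt − x̃_opt‖₂² ≤ ε ‖A x_opt − b‖₂² / σ_min²(A). -/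
open scoped Classical
open Matrix

/-- The square of the smallest singular value of a matrix `A`, characterized as the
infimum of the Rayleigh quotients `‖Ay‖₂²/‖y‖₂²` over nonzero vectors `y`. -/
noncomputable def sigmaMinSq {n d : ℕ} (A : Matrix (Fin n) (Fin d) ℝ) : ℝ :=
  ⨅ y : {y : Fin d → ℝ // y ≠ 0}, (∑ i, (A.mulVec y.1 i) ^ 2) / ∑ j, (y.1 j) ^ 2

/-!
Write `b⊥ = b - U Uᵀ b`. By the normal equations `A x_opt = U Uᵀ b`, so `R² = ‖b⊥‖²`, and since
`U Uᵀ` fixes the column space of `A`, the residual of the sketched solution splits orthogonally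
as `A x̃ - b = U z - b⊥` with `z = Uᵀ (A x̃ - b)`. Hence `‖A x̃ - b‖² = ‖z‖² + R²` and
`‖A (x_opt - x̃)‖ = ‖z‖`, and everything reduces to `‖z‖² ≤ ε R²`. The sketched normal equations,
projected onto the column space, read `(SU)ᵀ (SU) z = Uᵀ Sᵀ S b⊥`: by SC1 the left side has
squared norm at least `σ_min⁴(SU) ‖z‖² ≥ ‖z‖² / 2`, and by SC2 the right side at most `ε R² / 2`.
-/

section LeastSquares

variable {m k : Type*} [Fintype m] [Fintype k]

theorem sum_sq_eq_dotProduct_self (v : m → ℝ) : ∑ i, v i ^ 2 = v ⬝ᵥ v := by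
  simp only [dotProduct, sq]

theorem mulVec_dotProduct_eq_dotProduct_transpose_mulVec (M : Matrix m k ℝ) (v : k → ℝ)
    (w : m → ℝ) : M *ᵥ v ⬝ᵥ w = v ⬝ᵥ Mᵀ *ᵥ w := by
  rw [dotProduct_comm, dotProduct_mulVec, dotProduct_comm, mulVec_transpose]

theorem sum_sq_sub_eq_dotProduct_self (u v : m → ℝ) :
    ∑ i, (u i - v i) ^ 2 = (u - v) ⬝ᵥ (u - v) :=
  sum_sq_eq_dotProduct_self (u - v)

theorem dotProduct_self_nonneg (v : m → ℝ) : 0 ≤ v ⬝ᵥ v := by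
  rw [← sum_sq_eq_dotProduct_self]
  positivity

theorem sum_sq_pos {v : m → ℝ} (hv : v ≠ 0) : 0 < ∑ i, v i ^ 2 := by
  rw [sum_sq_eq_dotProduct_self]
  exact (dotProduct_self_nonneg v).lt_of_ne (Ne.symm (dotProduct_self_eq_zero.not.mpr hv))

def IsLeastSquaresSolution (M : Matrix m k ℝ) (c : m → ℝ) (x₀ : k → ℝ) : Prop :=
  ∀ x, ∑ i, ((M *ᵥ x₀) i - c i) ^ 2 ≤ ∑ i, ((M *ᵥ x) i - c i) ^ 2

theorem IsLeastSquaresSolution.transpose_mulVec_sub_eq_zero {M : Matrix m k ℝ} {c : m → ℝ}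
    {x₀ : k → ℝ} (h : IsLeastSquaresSolution M c x₀) : Mᵀ *ᵥ (M *ᵥ x₀ - c) = 0 := by
  set r := M *ᵥ x₀ - c
  set w := M *ᵥ (Mᵀ *ᵥ r)
  -- Moving from `x₀` along `Mᵀ r` raises the objective by a quadratic in `t` without constant
  -- term; its being nonnegative forces the linear coefficient `2 ⟪w, r⟫ = 2 ‖Mᵀ r‖²` to vanish.
  have hquad : ∀ t : ℝ, 0 ≤ (w ⬝ᵥ w) * (t * t) + 2 * (w ⬝ᵥ r) * t + 0 := by
    intro t
    have hmove : M *ᵥ (x₀ + t • Mᵀ *ᵥ r) - c = r + t • w := by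
      simp only [mulVec_add, mulVec_smul, r, w]; abel
    have hmin : r ⬝ᵥ r ≤ (r + t • w) ⬝ᵥ (r + t • w) := by
      simpa only [sum_sq_sub_eq_dotProduct_self, hmove] using h (x₀ + t • Mᵀ *ᵥ r)
    simp only [add_dotProduct, dotProduct_add, smul_dotProduct, dotProduct_smul, smul_eq_mul,
      dotProduct_comm r w] at hmin
    linarith
  have hwr : w ⬝ᵥ r = 0 := by
    have := discrim_le_zero hquad
    rw [discrim] at this
    nlinarith [sq_nonneg (w ⬝ᵥ r)]
  rw [mulVec_dotProduct_eq_dotProduct_transpose_mulVec] at hwr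
  exact dotProduct_self_eq_zero.mp hwr

end LeastSquares

section ColumnSpace

variable {m k l : Type*} [Fintype m] [Fintype k] [Fintype l]
  {A : Matrix m k ℝ} {U : Matrix m l ℝ}

theorem transpose_mulVec_eq_zero_of_range_le
    (h : LinearMap.range U.mulVecLin ≤ LinearMap.range A.mulVecLin) {v : m → ℝ}
    (hv : Aᵀ *ᵥ v = 0) : Uᵀ *ᵥ v = 0 := by
  obtain ⟨x, hx⟩ := h ⟨Uᵀ *ᵥ v, rfl⟩
  simp only [mulVecLin_apply] at hx
  apply dotProduct_self_eq_zero.mp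
  rw [← mulVec_dotProduct_eq_dotProduct_transpose_mulVec, ← hx,
    mulVec_dotProduct_eq_dotProduct_transpose_mulVec, hv, dotProduct_zero]

theorem IsLeastSquaresSolution.transpose_mulVec_sketch_eq_zero {s : Type*} [Fintype s]
    (hUA : LinearMap.range U.mulVecLin ≤ LinearMap.range A.mulVecLin) {S : Matrix s m ℝ}
    {b : m → ℝ} {x : k → ℝ} (h : IsLeastSquaresSolution (S * A) (S *ᵥ b) x) :
    Uᵀ *ᵥ (Sᵀ *ᵥ (S *ᵥ (A *ᵥ x - b))) = 0 := by
  apply transpose_mulVec_eq_zero_of_range_le hUA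
  simpa only [transpose_mul, mulVec_sub, ← mulVec_mulVec] using h.transpose_mulVec_sub_eq_zero

variable [DecidableEq l]

theorem transpose_mulVec_mulVec_of_transpose_mul_self (hU : Uᵀ * U = 1) (v : l → ℝ) :
    Uᵀ *ᵥ (U *ᵥ v) = v := by
  rw [mulVec_mulVec, hU, one_mulVec]

theorem mulVec_dotProduct_mulVec_of_transpose_mul_self (hU : Uᵀ * U = 1) (v : l → ℝ) :
    U *ᵥ v ⬝ᵥ U *ᵥ v = v ⬝ᵥ v := by
  rw [mulVec_dotProduct_eq_dotProduct_transpose_mulVec,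
    transpose_mulVec_mulVec_of_transpose_mul_self hU]

theorem mulVec_transpose_mulVec_of_mem_range (hU : Uᵀ * U = 1) {w : m → ℝ}
    (hw : w ∈ LinearMap.range U.mulVecLin) : U *ᵥ (Uᵀ *ᵥ w) = w := by
  obtain ⟨c, rfl⟩ := hw
  rw [mulVecLin_apply, transpose_mulVec_mulVec_of_transpose_mul_self hU]

theorem sub_dotProduct_sub_of_transpose_mulVec_eq_zero (hU : Uᵀ * U = 1) (v : l → ℝ)
    {w : m → ℝ} (hw : Uᵀ *ᵥ w = 0) :
    (U *ᵥ v - w) ⬝ᵥ (U *ᵥ v - w) = v ⬝ᵥ v + w ⬝ᵥ w := by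
  have hcross : U *ᵥ v ⬝ᵥ w = 0 := by
    rw [mulVec_dotProduct_eq_dotProduct_transpose_mulVec, hw, dotProduct_zero]
  simp only [sub_dotProduct, dotProduct_sub, dotProduct_comm w (U *ᵥ v), hcross,
    mulVec_dotProduct_mulVec_of_transpose_mul_self hU]
  ring

theorem IsLeastSquaresSolution.mulVec_eq (hU : Uᵀ * U = 1)
    (hAU : LinearMap.range A.mulVecLin = LinearMap.range U.mulVecLin) {b : m → ℝ} {x : k → ℝ}
    (h : IsLeastSquaresSolution A b x) : A *ᵥ x = U *ᵥ (Uᵀ *ᵥ b) := by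
  have hUx : Uᵀ *ᵥ (A *ᵥ x) = Uᵀ *ᵥ b := by
    rw [← sub_eq_zero, ← mulVec_sub]
    exact transpose_mulVec_eq_zero_of_range_le hAU.ge h.transpose_mulVec_sub_eq_zero
  rw [← hUx, mulVec_transpose_mulVec_of_mem_range hU (hAU ▸ ⟨x, rfl⟩)]

end ColumnSpace

section SmallestSingularValue

variable {n d : ℕ}

theorem sigmaMinSq_nonneg (A : Matrix (Fin n) (Fin d) ℝ) : 0 ≤ sigmaMinSq A :=
  Real.iInf_nonneg fun _ => by positivity

theorem sigmaMinSq_mul_sum_sq_le (A : Matrix (Fin n) (Fin d) ℝ) (y : Fin d → ℝ) :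
    sigmaMinSq A * ∑ j, y j ^ 2 ≤ ∑ i, (A *ᵥ y) i ^ 2 := by
  rcases eq_or_ne y 0 with rfl | hy
  · simp
  rw [← le_div_iff₀ (sum_sq_pos hy)]
  exact ciInf_le ⟨0, by rintro _ ⟨z, rfl⟩; positivity⟩ (⟨y, hy⟩ : {y : Fin d → ℝ // y ≠ 0})

theorem sigmaMinSq_pos {A : Matrix (Fin n) (Fin d) ℝ} (hA : A.rank = d) (hd : d ≠ 0) :
    0 < sigmaMinSq A := by
  have hinj : Function.Injective A.mulVecLin := by
    have hrank := A.mulVecLin.finrank_range_add_finrank_ker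
    rw [← Matrix.rank, hA, Module.finrank_fin_fun] at hrank
    exact LinearMap.ker_eq_bot.mp (Submodule.finrank_eq_zero.mp (by omega))
  obtain ⟨K, hK, hanti⟩ := (toLpLin 2 2 A).injective_iff_antilipschitz.mp
    ((WithLp.toLp_injective 2).comp (hinj.comp (WithLp.ofLp_injective 2)))
  have hbound (y : {y : Fin d → ℝ // y ≠ 0}) :
      1 / (K : ℝ) ^ 2 ≤ (∑ i, (A *ᵥ y.1) i ^ 2) / ∑ j, y.1 j ^ 2 := by
    have h : ‖WithLp.toLp 2 y.1‖ ≤ K * ‖WithLp.toLp 2 (A *ᵥ y.1)‖ := by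
      simpa using hanti.le_mul_norm_sub 0 (WithLp.toLp 2 y.1)
    have hsq := pow_le_pow_left₀ (norm_nonneg _) h 2
    rw [mul_pow, EuclideanSpace.real_norm_sq_eq, EuclideanSpace.real_norm_sq_eq] at hsq
    rw [div_le_div_iff₀ (by positivity) (sum_sq_pos y.2), one_mul, mul_comm]
    simpa using hsq
  have : Nonempty {y : Fin d → ℝ // y ≠ 0} := ⟨⟨fun _ => 1, by
    intro h; have := congrFun h ⟨0, Nat.pos_of_ne_zero hd⟩; simp at this⟩⟩
  exact (by positivity : (0 : ℝ) < 1 / (K : ℝ) ^ 2).trans_le (le_ciInf hbound)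

theorem sum_sq_le_sum_sq_mulVec_div_sigmaMinSq {A : Matrix (Fin n) (Fin d) ℝ} (hA : A.rank = d)
    (x : Fin d → ℝ) : ∑ j, x j ^ 2 ≤ (∑ i, (A *ᵥ x) i ^ 2) / sigmaMinSq A := by
  rcases eq_or_ne x 0 with rfl | hx
  · simp
  have hd : d ≠ 0 := by rintro rfl; exact hx (Subsingleton.elim _ _)
  rw [le_div_iff₀ (sigmaMinSq_pos hA hd), mul_comm]
  exact sigmaMinSq_mul_sum_sq_le A x

theorem sigmaMinSq_sq_mul_sum_sq_le (M : Matrix (Fin n) (Fin d) ℝ) (z : Fin d → ℝ) :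
    sigmaMinSq M ^ 2 * ∑ j, z j ^ 2 ≤ ∑ j, ((Mᵀ * M) *ᵥ z) j ^ 2 := by
  set g := (Mᵀ * M) *ᵥ z
  have hray : sigmaMinSq M * (z ⬝ᵥ z) ≤ z ⬝ᵥ g := by
    have h := sigmaMinSq_mul_sum_sq_le M z
    rwa [sum_sq_eq_dotProduct_self, sum_sq_eq_dotProduct_self,
      mulVec_dotProduct_eq_dotProduct_transpose_mulVec, mulVec_mulVec] at h
  have hcs : (z ⬝ᵥ g) ^ 2 ≤ (z ⬝ᵥ z) * (g ⬝ᵥ g) := by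
    simpa only [dotProduct, sq] using Finset.sum_mul_sq_le_sq_mul_sq Finset.univ z g
  have hσ := sigmaMinSq_nonneg M
  rw [sum_sq_eq_dotProduct_self, sum_sq_eq_dotProduct_self]
  rcases (dotProduct_self_nonneg z).eq_or_lt with hz | hz
  · rw [← hz, mul_zero]; exact dotProduct_self_nonneg g
  · nlinarith [mul_le_mul_of_nonneg_left hray hσ]

theorem sum_sq_le_two_mul_sum_sq_transpose_mul_self_mulVec {M : Matrix (Fin n) (Fin d) ℝ}
    (hM : 1 / √2 ≤ sigmaMinSq M) (z : Fin d → ℝ) :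
    ∑ j, z j ^ 2 ≤ 2 * ∑ j, ((Mᵀ * M) *ᵥ z) j ^ 2 := by
  have hσ : 1 / 2 ≤ sigmaMinSq M ^ 2 := by
    calc (1 : ℝ) / 2 = (1 / √2) ^ 2 := by rw [div_pow, Real.sq_sqrt zero_le_two, one_pow]
      _ ≤ _ := pow_le_pow_left₀ (by positivity) hM 2
  nlinarith [sigmaMinSq_sq_mul_sum_sq_le M z, sum_sq_eq_dotProduct_self z,
    dotProduct_self_nonneg z]

end SmallestSingularValue

theorem statement12_general (n d s : ℕ)
    (A : Matrix (Fin n) (Fin d) ℝ) (hrank : A.rank = d)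
    (U : Matrix (Fin n) (Fin d) ℝ) (hU : Uᵀ * U = 1)
    (hspan : Submodule.span ℝ (Set.range Uᵀ) = Submodule.span ℝ (Set.range Aᵀ))
    (b : Fin n → ℝ) (S : Matrix (Fin s) (Fin n) ℝ)
    (ε : ℝ)
    (xopt : Fin d → ℝ)
    (hxopt : ∀ x, ∑ i, (A.mulVec xopt i - b i) ^ 2 ≤ ∑ i, (A.mulVec x i - b i) ^ 2)
    (sc1 : 1 / Real.sqrt 2 ≤ sigmaMinSq (S * U))
    (sc2 : ∑ k, ((Uᵀ * Sᵀ * S).mulVec (b - U.mulVec (Uᵀ.mulVec b)) k) ^ 2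
        ≤ ε * (∑ i, (A.mulVec xopt i - b i) ^ 2) / 2)
    (xt : Fin d → ℝ)
    (hxt : ∀ x, ∑ j, ((S * A).mulVec xt j - S.mulVec b j) ^ 2 ≤
        ∑ j, ((S * A).mulVec x j - S.mulVec b j) ^ 2) :
    (∑ i, (A.mulVec xt i - b i) ^ 2 ≤ (1 + ε) * ∑ i, (A.mulVec xopt i - b i) ^ 2) ∧
    (∑ k, (xopt k - xt k) ^ 2 ≤
        ε * (∑ i, (A.mulVec xopt i - b i) ^ 2) / sigmaMinSq A) := by
  have hrange : LinearMap.range A.mulVecLin = LinearMap.range U.mulVecLin := by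
    rw [range_mulVecLin, range_mulVecLin]
    exact hspan.symm
  have hAxopt : A *ᵥ xopt = U *ᵥ (Uᵀ *ᵥ b) := IsLeastSquaresSolution.mulVec_eq hU hrange hxopt
  set bp := b - U *ᵥ (Uᵀ *ᵥ b) with hbp_def
  set z := Uᵀ *ᵥ (A *ᵥ xt - b) with hz_def
  have hbp : Uᵀ *ᵥ bp = 0 := by
    rw [mulVec_sub, transpose_mulVec_mulVec_of_transpose_mul_self hU, sub_self]
  have hR2 : ∑ i, ((A *ᵥ xopt) i - b i) ^ 2 = bp ⬝ᵥ bp := by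
    rw [sum_sq_sub_eq_dotProduct_self, hAxopt, ← neg_sub, neg_dotProduct_neg]
  have hAxt : U *ᵥ (Uᵀ *ᵥ (A *ᵥ xt)) = A *ᵥ xt :=
    mulVec_transpose_mulVec_of_mem_range hU (hrange ▸ ⟨xt, rfl⟩)
  have hres : A *ᵥ xt - b = U *ᵥ z - bp := by
    rw [hz_def, hbp_def, mulVec_sub, mulVec_sub, hAxt]; abel
  have hdiff : A *ᵥ (xopt - xt) = -(U *ᵥ z) := by
    rw [mulVec_sub, hAxopt, hz_def, mulVec_sub, mulVec_sub, hAxt]; abel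
  have hnormal : ((S * U)ᵀ * (S * U)) *ᵥ z = (Uᵀ * Sᵀ * S) *ᵥ bp := by
    have h := IsLeastSquaresSolution.transpose_mulVec_sketch_eq_zero hrange.ge hxt
    rw [hres] at h
    simpa only [transpose_mul, mulVec_sub, ← mulVec_mulVec, sub_eq_zero] using h
  have hz : ∑ j, z j ^ 2 ≤ ε * ∑ i, ((A *ᵥ xopt) i - b i) ^ 2 := by
    have h := sum_sq_le_two_mul_sum_sq_transpose_mul_self_mulVec sc1 z
    rw [hnormal] at h
    linarith
  constructor
  · rw [sum_sq_sub_eq_dotProduct_self, hres,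
      sub_dotProduct_sub_of_transpose_mulVec_eq_zero hU z hbp, ← hR2, ← sum_sq_eq_dotProduct_self]
    linarith
  · calc ∑ k, (xopt k - xt k) ^ 2
        ≤ (∑ i, (A *ᵥ (xopt - xt)) i ^ 2) / sigmaMinSq A :=
          sum_sq_le_sum_sq_mulVec_div_sigmaMinSq hrank (xopt - xt)
      _ = (∑ j, z j ^ 2) / sigmaMinSq A := by
          rw [hdiff, sum_sq_eq_dotProduct_self, sum_sq_eq_dotProduct_self, neg_dotProduct_neg,
            mulVec_dotProduct_mulVec_of_transpose_mul_self hU]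
      _ ≤ _ := div_le_div_of_nonneg_right hz (sigmaMinSq_nonneg A)

/-- Deterministic guarantees for a sketched overdetermined least
squares problem under the two structural conditions.  Here `U` is an orthonormal basis
of the column space of `A` (from the thin SVD), `b⊥ = b − U Uᵀ b` is the projection of
`b` onto the orthogonal complement of the column space of `A`, `x_opt` is a minimizer
of `‖Ax − b‖₂²` (with optimal residual `R² = ‖A x_opt − b‖₂²`), and `x̃_opt` is a
minimizer of the sketched problem `‖SAx − Sb‖₂²`.  If SC1: `σ_min²(SU) ≥ 1/√2` and
SC2: `‖Uᵀ Sᵀ S b⊥‖₂² ≤ ε R²/2`, then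
`‖A x̃_opt − b‖₂² ≤ (1+ε) R²` and `‖x_opt − x̃_opt‖₂² ≤ ε R² / σ_min²(A)`. -/
theorem statement12 (n d s : ℕ) (hnd : d < n)
    (A : Matrix (Fin n) (Fin d) ℝ) (hrank : A.rank = d)
    (U : Matrix (Fin n) (Fin d) ℝ) (hU : Uᵀ * U = 1)
    (hspan : Submodule.span ℝ (Set.range Uᵀ) = Submodule.span ℝ (Set.range Aᵀ))
    (b : Fin n → ℝ) (S : Matrix (Fin s) (Fin n) ℝ)
    (ε : ℝ) (hε : ε ∈ Set.Ioo (0 : ℝ) 1)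
    (xopt : Fin d → ℝ)
    (hxopt : ∀ x, ∑ i, (A.mulVec xopt i - b i) ^ 2 ≤ ∑ i, (A.mulVec x i - b i) ^ 2)
    (sc1 : 1 / Real.sqrt 2 ≤ sigmaMinSq (S * U))
    (sc2 : ∑ k, ((Uᵀ * Sᵀ * S).mulVec (b - U.mulVec (Uᵀ.mulVec b)) k) ^ 2
        ≤ ε * (∑ i, (A.mulVec xopt i - b i) ^ 2) / 2)
    (xt : Fin d → ℝ)
    (hxt : ∀ x, ∑ j, ((S * A).mulVec xt j - S.mulVec b j) ^ 2 ≤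
        ∑ j, ((S * A).mulVec x j - S.mulVec b j) ^ 2) :
    (∑ i, (A.mulVec xt i - b i) ^ 2 ≤ (1 + ε) * ∑ i, (A.mulVec xopt i - b i) ^ 2) ∧
    (∑ k, (xopt k - xt k) ^ 2 ≤
        ε * (∑ i, (A.mulVec xopt i - b i) ^ 2) / sigmaMinSq A) :=
  statement12_general n d s A hrank U hU hspan b S ε xopt hxopt sc1 sc2 xt hxt
end

section
/- Let A ∈ ℝ^{n×m}, B ∈ ℝ^{n×p}, and let p ∈ [0,1]^n be a probability distribution with p_k ≥ β ‖A(k,:)‖₂² / ‖A‖_F² for all k ∈ [n] and some β ∈ (0,1]. Draw s indices ξ^{(1)},…,ξ^{(s)} i.i.d. from p and form the approximate product (SA)ᵀSB = (1/s) Σ_{t=1}^s A(ξ^{(t)},:)ᵀ B(ξ^{(t)},:) / p_{ξ^{(t)}}. Then E[‖AᵀB − (SA)ᵀSB‖_F²] ≤ (1/(β s)) ‖A‖_F² ‖B‖_F². -/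
open scoped Classical
open Matrix


lemma sum_prod_pi {s n : ℕ} (h : Fin s → Fin n → ℝ) :
    ∑ ξ : Fin s → Fin n, ∏ t, h t (ξ t) = ∏ t, ∑ k, h t k := by
  rw [Finset.prod_univ_sum, ← Fintype.piFinset_univ]

lemma sum_prod_one {s n : ℕ} (p : Fin n → ℝ) (hp1 : ∑ k, p k = 1) :
    ∑ ξ : Fin s → Fin n, (∏ t, p (ξ t)) = 1 := by
  rw [sum_prod_pi (fun _ k => p k)]
  simp [hp1]

lemma marg {s n : ℕ} (p g : Fin n → ℝ) (hp1 : ∑ k, p k = 1) (t₀ : Fin s) :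
    ∑ ξ : Fin s → Fin n, (∏ t, p (ξ t)) * g (ξ t₀) = ∑ k, p k * g k := by
  have h := sum_prod_pi (fun t k => p k * (if t = t₀ then g k else 1))
  have l1 : ∀ ξ : Fin s → Fin n,
      (∏ t, p (ξ t) * (if t = t₀ then g (ξ t) else 1))
        = (∏ t, p (ξ t)) * g (ξ t₀) := by
    intro ξ
    rw [Finset.prod_mul_distrib, Finset.prod_ite_eq' Finset.univ t₀ (fun t => g (ξ t))]
    simp
  have l2 : ∀ t : Fin s, (∑ k, p k * (if t = t₀ then g k else 1))
      = if t = t₀ then ∑ k, p k * g k else 1 := by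
    intro t; split_ifs with ht <;> simp [ht, hp1]
  calc ∑ ξ : Fin s → Fin n, (∏ t, p (ξ t)) * g (ξ t₀)
      = ∑ ξ : Fin s → Fin n, ∏ t, p (ξ t) * (if t = t₀ then g (ξ t) else 1) := by
        exact (Finset.sum_congr rfl fun ξ _ => l1 ξ).symm
    _ = ∏ t, ∑ k, p k * (if t = t₀ then g k else 1) := h
    _ = ∏ t : Fin s, (if t = t₀ then ∑ k, p k * g k else 1) :=
        Finset.prod_congr rfl fun t _ => l2 t
    _ = ∑ k, p k * g k := by
        rw [Finset.prod_ite_eq' Finset.univ t₀ (fun _ => ∑ k, p k * g k)]; simp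

lemma pairmarg {s n : ℕ} (p g : Fin n → ℝ) (hp1 : ∑ k, p k = 1) {a b : Fin s}
    (hab : a ≠ b) :
    ∑ ξ : Fin s → Fin n, (∏ t, p (ξ t)) * (g (ξ a) * g (ξ b))
      = (∑ k, p k * g k) ^ 2 := by
  have h := sum_prod_pi
    (fun t k => p k * (if t = a then g k else 1) * (if t = b then g k else 1))
  have l1 : ∀ ξ : Fin s → Fin n,
      (∏ t, p (ξ t) * (if t = a then g (ξ t) else 1) * (if t = b then g (ξ t) else 1))
        = (∏ t, p (ξ t)) * (g (ξ a) * g (ξ b)) := by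
    intro ξ
    rw [Finset.prod_mul_distrib, Finset.prod_mul_distrib,
      Finset.prod_ite_eq' Finset.univ a (fun t => g (ξ t)),
      Finset.prod_ite_eq' Finset.univ b (fun t => g (ξ t))]
    simp [mul_assoc]
  have l2 : ∀ t : Fin s,
      (∑ k, p k * (if t = a then g k else 1) * (if t = b then g k else 1))
        = if t = a ∨ t = b then ∑ k, p k * g k else 1 := by
    intro t
    rcases eq_or_ne t a with rfl | ha
    · have : t ≠ b := hab
      simp [this, hp1]
    · rcases eq_or_ne t b with rfl | hb
      · simp [ha, hp1]
      · simp [ha, hb, hp1]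
  have l3 : (∏ t : Fin s, (if t = a ∨ t = b then (∑ k, p k * g k) else 1))
      = (∑ k, p k * g k) ^ 2 := by
    rw [← Finset.prod_subset (Finset.subset_univ ({a, b} : Finset (Fin s)))
      (by intro x _ hx; simp only [Finset.mem_insert, Finset.mem_singleton] at hx
          push_neg at hx
          simp [hx.1, hx.2])]
    rw [Finset.prod_pair hab]
    simp [sq]
  calc ∑ ξ : Fin s → Fin n, (∏ t, p (ξ t)) * (g (ξ a) * g (ξ b))
      = ∑ ξ : Fin s → Fin n,
          ∏ t, p (ξ t) * (if t = a then g (ξ t) else 1) * (if t = b then g (ξ t) else 1) :=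
        (Finset.sum_congr rfl fun ξ _ => l1 ξ).symm
    _ = ∏ t, ∑ k, p k * (if t = a then g k else 1) * (if t = b then g k else 1) := h
    _ = ∏ t : Fin s, (if t = a ∨ t = b then (∑ k, p k * g k) else 1) :=
        Finset.prod_congr rfl fun t _ => l2 t
    _ = (∑ k, p k * g k) ^ 2 := l3

lemma exp_sq {s n : ℕ} (hs : 0 < s) (p f : Fin n → ℝ) (hp1 : ∑ k, p k = 1) :
    ∑ ξ : Fin s → Fin n,
        (∏ t, p (ξ t)) * ((∑ k, p k * f k) - (1 / (s : ℝ)) * ∑ t, f (ξ t)) ^ 2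
      = (1 / (s : ℝ)) * ((∑ k, p k * f k ^ 2) - (∑ k, p k * f k) ^ 2) := by
  set μ := ∑ k, p k * f k with hμ
  set E2 := ∑ k, p k * f k ^ 2 with hE2
  have hsR : (0 : ℝ) < (s : ℝ) := by exact_mod_cast hs
  -- first moment of the sum
  have hT1 : ∑ ξ : Fin s → Fin n, (∏ t, p (ξ t)) * (∑ t, f (ξ t)) = (s : ℝ) * μ := by
    calc ∑ ξ : Fin s → Fin n, (∏ t, p (ξ t)) * (∑ t, f (ξ t))
        = ∑ ξ : Fin s → Fin n, ∑ t, (∏ t', p (ξ t')) * f (ξ t) := by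
          exact Finset.sum_congr rfl fun ξ _ => Finset.mul_sum _ _ _
      _ = ∑ t : Fin s, ∑ ξ : Fin s → Fin n, (∏ t', p (ξ t')) * f (ξ t) :=
          Finset.sum_comm
      _ = ∑ t : Fin s, μ := Finset.sum_congr rfl fun t _ => marg p f hp1 t
      _ = (s : ℝ) * μ := by simp [mul_comm]
  -- second moment of the sum
  have hT2 : ∑ ξ : Fin s → Fin n, (∏ t, p (ξ t)) * (∑ t, f (ξ t)) ^ 2
      = (s : ℝ) * E2 + ((s : ℝ) ^ 2 - (s : ℝ)) * μ ^ 2 := by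
    have expand : ∀ ξ : Fin s → Fin n,
        (∏ t, p (ξ t)) * (∑ t, f (ξ t)) ^ 2
          = ∑ a : Fin s, ∑ b : Fin s, (∏ t, p (ξ t)) * (f (ξ a) * f (ξ b)) := by
      intro ξ
      rw [sq, Finset.sum_mul_sum]
      rw [Finset.mul_sum]
      exact Finset.sum_congr rfl fun a _ => Finset.mul_sum _ _ _
    calc ∑ ξ : Fin s → Fin n, (∏ t, p (ξ t)) * (∑ t, f (ξ t)) ^ 2
        = ∑ ξ : Fin s → Fin n, ∑ a : Fin s, ∑ b : Fin s,
            (∏ t, p (ξ t)) * (f (ξ a) * f (ξ b)) :=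
          Finset.sum_congr rfl fun ξ _ => expand ξ
      _ = ∑ a : Fin s, ∑ b : Fin s, ∑ ξ : Fin s → Fin n,
            (∏ t, p (ξ t)) * (f (ξ a) * f (ξ b)) := by
          rw [Finset.sum_comm]
          exact Finset.sum_congr rfl fun a _ => Finset.sum_comm
      _ = ∑ a : Fin s, ∑ b : Fin s, (if a = b then E2 else μ ^ 2) := by
          refine Finset.sum_congr rfl fun a _ => Finset.sum_congr rfl fun b _ => ?_
          split_ifs with hab
          · subst hab
            have := marg p (fun k => f k ^ 2) hp1 a
            calc ∑ ξ : Fin s → Fin n, (∏ t, p (ξ t)) * (f (ξ a) * f (ξ a))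
                = ∑ ξ : Fin s → Fin n, (∏ t, p (ξ t)) * (f (ξ a) ^ 2) := by
                  exact Finset.sum_congr rfl fun ξ _ => by ring
              _ = E2 := this
          · exact pairmarg p f hp1 hab
      _ = ∑ a : Fin s, ((s : ℝ) * μ ^ 2 + (E2 - μ ^ 2)) := by
          refine Finset.sum_congr rfl fun a _ => ?_
          have : ∀ b : Fin s, (if a = b then E2 else μ ^ 2)
              = μ ^ 2 + (if a = b then E2 - μ ^ 2 else 0) := by
            intro b; split_ifs <;> ring
          rw [Finset.sum_congr rfl fun b _ => this b, Finset.sum_add_distrib,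
            Finset.sum_ite_eq]
          simp [mul_comm]
      _ = (s : ℝ) * E2 + ((s : ℝ) ^ 2 - (s : ℝ)) * μ ^ 2 := by
          simp; ring
  -- expand the square
  have expand2 : ∀ ξ : Fin s → Fin n,
      (∏ t, p (ξ t)) * (μ - (1 / (s : ℝ)) * ∑ t, f (ξ t)) ^ 2
        = μ ^ 2 * (∏ t, p (ξ t))
          - (2 * μ / (s : ℝ)) * ((∏ t, p (ξ t)) * (∑ t, f (ξ t)))
          + (1 / (s : ℝ) ^ 2) * ((∏ t, p (ξ t)) * (∑ t, f (ξ t)) ^ 2) := by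
    intro ξ
    field_simp
    ring
  rw [Finset.sum_congr rfl fun ξ _ => expand2 ξ, Finset.sum_add_distrib,
    Finset.sum_sub_distrib, ← Finset.mul_sum, ← Finset.mul_sum, ← Finset.mul_sum,
    sum_prod_one p hp1, hT1, hT2]
  field_simp
  ring

set_option maxHeartbeats 1000000 in
/-- Randomized matrix-multiplication error bound: if the sampling
probabilities satisfy `p_k ≥ β ‖A(k,:)‖₂²/‖A‖_F²` and `s` rows are drawn i.i.d.
from `p` (the expectation over the draw `ξ : Fin s → Fin n` with weight `∏ t, p (ξ t)`
is written out as a finite sum), then the approximate product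
`(SA)ᵀSB = (1/s) Σ_t A(ξ_t,:)ᵀ B(ξ_t,:)/p_{ξ_t}` satisfies
`E[‖AᵀB − (SA)ᵀSB‖_F²] ≤ ‖A‖_F² ‖B‖_F² / (β s)`. -/
theorem statement14 (n m q s : ℕ) (hs : 0 < s)
    (A : Matrix (Fin n) (Fin m) ℝ) (B : Matrix (Fin n) (Fin q) ℝ)
    (p : Fin n → ℝ) (hp0 : ∀ k, 0 ≤ p k) (hp1 : ∑ k, p k = 1)
    (β : ℝ) (hβ : β ∈ Set.Ioc (0 : ℝ) 1)
    (hpk : ∀ k, β * (∑ i, A k i ^ 2) / (∑ k', ∑ i, A k' i ^ 2) ≤ p k) :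
    ∑ ξ : Fin s → Fin n,
        (∏ t, p (ξ t)) *
          ∑ i, ∑ j,
            ((Aᵀ * B) i j - (1 / (s : ℝ)) * ∑ t, A (ξ t) i * B (ξ t) j / p (ξ t)) ^ 2
      ≤ (1 / (β * s)) * (∑ k, ∑ i, A k i ^ 2) * (∑ k, ∑ j, B k j ^ 2) := by
  obtain ⟨hβ0, hβ1⟩ := hβ
  have hsR : (0 : ℝ) < (s : ℝ) := by exact_mod_cast hs
  set TA := ∑ k, ∑ i, A k i ^ 2 with hTA
  set TB := ∑ k, ∑ j, B k j ^ 2 with hTB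
  have hrowA : ∀ k, (0 : ℝ) ≤ ∑ i, A k i ^ 2 :=
    fun k => Finset.sum_nonneg fun i _ => sq_nonneg _
  have hrowB : ∀ k, (0 : ℝ) ≤ ∑ j, B k j ^ 2 :=
    fun k => Finset.sum_nonneg fun j _ => sq_nonneg _
  have hTA0 : 0 ≤ TA := Finset.sum_nonneg fun k _ => hrowA k
  have hTB0 : 0 ≤ TB := Finset.sum_nonneg fun k _ => hrowB k
  -- if p k = 0 then row k of A vanishes
  have hA0 : ∀ k, p k = 0 → ∀ i, A k i = 0 := by
    intro k hk i
    rcases eq_or_lt_of_le hTA0 with hT | hT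
    · have : ∀ k' ∈ Finset.univ, ∀ i' ∈ Finset.univ, A k' i' ^ 2 = 0 := by
        have h1 := (Finset.sum_eq_zero_iff_of_nonneg
          (fun k' _ => hrowA k')).mp hT.symm
        intro k' _ i' _
        exact (Finset.sum_eq_zero_iff_of_nonneg
          (fun i' _ => sq_nonneg (A k' i'))).mp (h1 k' (Finset.mem_univ k')) i'
          (Finset.mem_univ i')
      have := this k (Finset.mem_univ k) i (Finset.mem_univ i)
      exact pow_eq_zero_iff (by norm_num) |>.mp this
    · have h1 := hpk k
      rw [hk] at h1
      have h2 : β * (∑ i, A k i ^ 2) ≤ 0 := by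
        by_contra h3
        push_neg at h3
        exact absurd h1 (not_le.mpr (div_pos h3 hT))
      have h5 : (∑ i, A k i ^ 2) = 0 := by nlinarith [hrowA k]
      have := (Finset.sum_eq_zero_iff_of_nonneg
        (fun i' _ => sq_nonneg (A k i'))).mp h5 i (Finset.mem_univ i)
      exact pow_eq_zero_iff (by norm_num) |>.mp this
  -- rewrite the LHS using exp_sq per entry (i,j)
  have key : ∀ i j,
      ∑ ξ : Fin s → Fin n,
          (∏ t, p (ξ t)) *
            ((Aᵀ * B) i j - (1 / (s : ℝ)) * ∑ t, A (ξ t) i * B (ξ t) j / p (ξ t)) ^ 2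
        = (1 / (s : ℝ)) * ((∑ k, p k * (A k i * B k j / p k) ^ 2)
            - (∑ k, p k * (A k i * B k j / p k)) ^ 2) := by
    intro i j
    have hmu : (Aᵀ * B) i j = ∑ k, p k * (A k i * B k j / p k) := by
      rw [Matrix.mul_apply]
      refine Finset.sum_congr rfl fun k _ => ?_
      rcases eq_or_ne (p k) 0 with hk | hk
      · simp [transpose_apply, hA0 k hk i]
      · rw [transpose_apply, mul_div_assoc', mul_comm (p k), mul_div_assoc,
          div_self hk, mul_one]
    rw [hmu]
    exact exp_sq hs p (fun k => A k i * B k j / p k) hp1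
  -- swap the sums in the LHS
  have swap : ∑ ξ : Fin s → Fin n,
        (∏ t, p (ξ t)) *
          ∑ i, ∑ j,
            ((Aᵀ * B) i j - (1 / (s : ℝ)) * ∑ t, A (ξ t) i * B (ξ t) j / p (ξ t)) ^ 2
      = ∑ i, ∑ j, ∑ ξ : Fin s → Fin n,
          (∏ t, p (ξ t)) *
            ((Aᵀ * B) i j - (1 / (s : ℝ)) * ∑ t, A (ξ t) i * B (ξ t) j / p (ξ t)) ^ 2 := by
    rw [Finset.sum_congr rfl fun ξ _ => Finset.mul_sum _ _ _, Finset.sum_comm]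
    refine Finset.sum_congr rfl fun i _ => ?_
    rw [Finset.sum_congr rfl fun ξ _ => Finset.mul_sum _ _ _, Finset.sum_comm]
  rw [swap, Finset.sum_congr rfl fun i _ => Finset.sum_congr rfl fun j _ => key i j]
  -- bound: drop the -μ² term
  have step1 : ∑ i, ∑ j, (1 / (s : ℝ)) * ((∑ k, p k * (A k i * B k j / p k) ^ 2)
        - (∑ k, p k * (A k i * B k j / p k)) ^ 2)
      ≤ (1 / (s : ℝ)) * ∑ i, ∑ j, ∑ k, p k * (A k i * B k j / p k) ^ 2 := by
    rw [Finset.mul_sum]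
    refine Finset.sum_le_sum fun i _ => ?_
    rw [Finset.mul_sum]
    refine Finset.sum_le_sum fun j _ => ?_
    have h1 : (0 : ℝ) ≤ (∑ k, p k * (A k i * B k j / p k)) ^ 2 := sq_nonneg _
    have h2 : (0 : ℝ) ≤ 1 / (s : ℝ) := by positivity
    nlinarith
  refine le_trans step1 ?_
  -- per-row bound
  have step2 : ∑ i, ∑ j, ∑ k, p k * (A k i * B k j / p k) ^ 2
      ≤ (TA / β) * TB := by
    have swap2 : ∑ i, ∑ j, ∑ k, p k * (A k i * B k j / p k) ^ 2
        = ∑ k, ∑ i, ∑ j, p k * (A k i * B k j / p k) ^ 2 := by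
      have hin : ∀ i : Fin m, ∑ j : Fin q, ∑ k : Fin n, p k * (A k i * B k j / p k) ^ 2
          = ∑ k : Fin n, ∑ j : Fin q, p k * (A k i * B k j / p k) ^ 2 :=
        fun i => Finset.sum_comm
      rw [Finset.sum_congr rfl fun i _ => hin i, Finset.sum_comm]
    rw [swap2]
    have perk : ∀ k, ∑ i, ∑ j, p k * (A k i * B k j / p k) ^ 2
        ≤ (TA / β) * (∑ j, B k j ^ 2) := by
      intro k
      rcases eq_or_ne (p k) 0 with hk | hk
      · simp only [hk, zero_mul, Finset.sum_const_zero]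
        positivity
      have hkpos : 0 < p k := lt_of_le_of_ne (hp0 k) (Ne.symm hk)
      have heq : ∑ i, ∑ j, p k * (A k i * B k j / p k) ^ 2
          = (∑ i, A k i ^ 2) * (∑ j, B k j ^ 2) / p k := by
        rw [Finset.sum_mul, Finset.sum_div]
        refine Finset.sum_congr rfl fun i _ => ?_
        rw [Finset.mul_sum, Finset.sum_div]
        refine Finset.sum_congr rfl fun j _ => ?_
        field_simp
      rw [heq]
      rcases eq_or_lt_of_le (hrowA k) with hr | hr
      · rw [← hr]
        simp only [zero_mul, zero_div]
        positivity
      · have hTApos : 0 < TA := lt_of_lt_of_le hr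
          (Finset.single_le_sum (fun k' _ => hrowA k') (Finset.mem_univ k))
        have h6 : β * (∑ i, A k i ^ 2) ≤ p k * TA := by
          have := hpk k
          rw [div_le_iff₀ hTApos] at this
          linarith [mul_comm (p k) TA]
        rw [div_le_iff₀ hkpos, div_mul_eq_mul_div, div_mul_eq_mul_div, le_div_iff₀ hβ0]
        have h7 := mul_le_mul_of_nonneg_right h6 (hrowB k)
        linarith [h7]
    calc ∑ k, ∑ i, ∑ j, p k * (A k i * B k j / p k) ^ 2
        ≤ ∑ k, (TA / β) * (∑ j, B k j ^ 2) := Finset.sum_le_sum fun k _ => perk k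
      _ = (TA / β) * TB := by rw [← Finset.mul_sum]
  calc (1 / (s : ℝ)) * ∑ i, ∑ j, ∑ k, p k * (A k i * B k j / p k) ^ 2
      ≤ (1 / (s : ℝ)) * ((TA / β) * TB) := by
        refine mul_le_mul_of_nonneg_left step2 (by positivity)
    _ = (1 / (β * s)) * TA * TB := by
        rw [one_div, one_div, mul_inv, div_eq_mul_inv]
        ring
end

section
/- Let A ∈ ℝ^{n×m}, B ∈ ℝ^{n×p}, and let p ∈ [0,1]^n be a probability distribution with p_k > 0 whenever row k of A or B is nonzero. Draw s indices ξ^{(1)},…,ξ^{(s)} i.i.d. from p and form the approximate product (SA)ᵀSB = (1/s) Σ_{t=1}^s A(ξ^{(t)},:)ᵀ B(ξ^{(t)},:) / p_{ξ^{(t)}}. Then for every (i,j), Var[((SA)ᵀSB)_{ij}] = (1/s) Σ_{k=1}^n A_{ki}² B_{kj}² / p_k − (1/s) ((AᵀB)_{ij})². -/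
open scoped Classical
open Matrix

private lemma sum_pi_prod {s n : ℕ} (g : Fin s → Fin n → ℝ) :
    ∑ ξ : Fin s → Fin n, ∏ t, g t (ξ t) = ∏ t, ∑ k, g t k :=
  (Fintype.prod_sum g).symm

/-- Variance of each entry of the sampled matrix product: if
`p_k > 0` whenever row `k` of `A` or of `B` is nonzero, and `s` rows are drawn i.i.d.
from `p` (the expectation over the draw `ξ : Fin s → Fin n` with weight `∏ t, p (ξ t)`
is written out as a finite sum), then for every entry `(i,j)` the variance of
`((SA)ᵀSB)_{ij} = (1/s) Σ_t A(ξ_t,i) B(ξ_t,j)/p_{ξ_t}` — i.e. the expected squared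
deviation from its mean `(AᵀB)_{ij}` — equals
`(1/s) Σ_k A_{ki}² B_{kj}²/p_k − (1/s) ((AᵀB)_{ij})²`. -/
theorem statement16 (n m q s : ℕ) (hs : 0 < s)
    (A : Matrix (Fin n) (Fin m) ℝ) (B : Matrix (Fin n) (Fin q) ℝ)
    (p : Fin n → ℝ) (hp0 : ∀ k, 0 ≤ p k) (hp1 : ∑ k, p k = 1)
    (hpos : ∀ k, (A k ≠ 0 ∨ B k ≠ 0) → 0 < p k) :
    ∀ (i : Fin m) (j : Fin q),
      ∑ ξ : Fin s → Fin n,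
          (∏ t, p (ξ t)) *
            ((1 / (s : ℝ)) * (∑ t, A (ξ t) i * B (ξ t) j / p (ξ t)) - (Aᵀ * B) i j) ^ 2
        = (1 / (s : ℝ)) * (∑ k, A k i ^ 2 * B k j ^ 2 / p k)
            - (1 / (s : ℝ)) * ((Aᵀ * B) i j) ^ 2 := by
  intro i j
  have hs' : (s : ℝ) ≠ 0 := Nat.cast_ne_zero.mpr hs.ne'
  set f : Fin n → ℝ := fun k => A k i * B k j / p k with hf
  set μ : ℝ := ∑ k, A k i * B k j with hμ
  set V : ℝ := ∑ k, p k * f k ^ 2 with hV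
  have hA0 : ∀ k, p k = 0 → A k i = 0 ∧ B k j = 0 := by
    intro k hk
    have h := mt (hpos k) (by simp [hk])
    push_neg at h
    exact ⟨by simpa using congrFun h.1 i, by simpa using congrFun h.2 j⟩
  have hpf : ∀ k, p k * f k = A k i * B k j := by
    intro k
    by_cases hk : p k = 0
    · simp [hf, hk, (hA0 k hk).1]
    · simp only [hf]
      field_simp
  have hμmat : (Aᵀ * B) i j = μ := by
    simp [Matrix.mul_apply, Matrix.transpose_apply, hμ]
  have hμ' : ∑ k, p k * f k = μ := by
    rw [hμ]; exact Finset.sum_congr rfl fun k _ => hpf k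
  have hV' : V = ∑ k, A k i ^ 2 * B k j ^ 2 / p k := by
    rw [hV]
    refine Finset.sum_congr rfl fun k _ => ?_
    by_cases hk : p k = 0
    · simp [hf, hk]
    · simp only [hf]
      field_simp
  -- basic expectation facts
  have h0 : ∑ ξ : Fin s → Fin n, ∏ t, p (ξ t) = 1 := by
    rw [sum_pi_prod (fun _ k => p k)]
    simp [hp1]
  have h1 : ∀ t₀ : Fin s,
      ∑ ξ : Fin s → Fin n, (∏ t, p (ξ t)) * f (ξ t₀) = μ := by
    intro t₀
    have e1 : ∀ ξ : Fin s → Fin n,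
        (∏ t, p (ξ t)) * f (ξ t₀)
          = ∏ t, (p (ξ t) * if t = t₀ then f (ξ t) else 1) := by
      intro ξ
      rw [Finset.prod_mul_distrib, Finset.prod_ite_eq' Finset.univ t₀ (fun t => f (ξ t)),
        if_pos (Finset.mem_univ t₀)]
    rw [Finset.sum_congr rfl fun ξ _ => e1 ξ,
      sum_pi_prod (fun t k => p k * if t = t₀ then f k else 1)]
    have e2 : ∀ t : Fin s,
        (∑ k, p k * if t = t₀ then f k else 1) = if t = t₀ then μ else 1 := by
      intro t
      by_cases h : t = t₀ <;> simp [h, hp1, hμ']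
    rw [Finset.prod_congr rfl fun t _ => e2 t,
      Finset.prod_ite_eq' Finset.univ t₀ (fun _ => μ)]
    simp
  have h2 : ∀ t₀ t₁ : Fin s,
      ∑ ξ : Fin s → Fin n, (∏ t, p (ξ t)) * (f (ξ t₀) * f (ξ t₁))
        = if t₀ = t₁ then V else μ * μ := by
    intro t₀ t₁
    by_cases hte : t₀ = t₁
    · subst hte
      simp only [if_pos rfl]
      have e1 : ∀ ξ : Fin s → Fin n,
          (∏ t, p (ξ t)) * (f (ξ t₀) * f (ξ t₀))
            = ∏ t, (p (ξ t) * if t = t₀ then f (ξ t) ^ 2 else 1) := by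
        intro ξ
        rw [Finset.prod_mul_distrib,
          Finset.prod_ite_eq' Finset.univ t₀ (fun t => f (ξ t) ^ 2),
          if_pos (Finset.mem_univ t₀)]
        ring
      rw [Finset.sum_congr rfl fun ξ _ => e1 ξ,
        sum_pi_prod (fun t k => p k * if t = t₀ then f k ^ 2 else 1)]
      have e2 : ∀ t : Fin s,
          (∑ k, p k * if t = t₀ then f k ^ 2 else 1) = if t = t₀ then V else 1 := by
        intro t
        by_cases h : t = t₀ <;> simp [h, hp1, hV]
      rw [Finset.prod_congr rfl fun t _ => e2 t,
        Finset.prod_ite_eq' Finset.univ t₀ (fun _ => V)]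
      simp
    · simp only [if_neg hte]
      have e1 : ∀ ξ : Fin s → Fin n,
          (∏ t, p (ξ t)) * (f (ξ t₀) * f (ξ t₁))
            = ∏ t, (p (ξ t) * ((if t = t₀ then f (ξ t) else 1)
                * (if t = t₁ then f (ξ t) else 1))) := by
        intro ξ
        rw [Finset.prod_mul_distrib, Finset.prod_mul_distrib,
          Finset.prod_ite_eq' Finset.univ t₀ (fun t => f (ξ t)),
          Finset.prod_ite_eq' Finset.univ t₁ (fun t => f (ξ t))]
        simp
      rw [Finset.sum_congr rfl fun ξ _ => e1 ξ,
        sum_pi_prod (fun t k => p k * ((if t = t₀ then f k else 1)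
            * (if t = t₁ then f k else 1)))]
      have e2 : ∀ t : Fin s,
          (∑ k, p k * ((if t = t₀ then f k else 1) * (if t = t₁ then f k else 1)))
            = (if t = t₀ then μ else 1) * (if t = t₁ then μ else 1) := by
        intro t
        have hte' : t₁ ≠ t₀ := fun h => hte h.symm
        by_cases h0 : t = t₀
        · have h1' : t ≠ t₁ := h0 ▸ hte
          simp [h0, h1', hμ', hte]
        · by_cases h1 : t = t₁
          · simp [h0, h1, hμ', hte']
          · simp [h0, h1, hp1]
      rw [Finset.prod_congr rfl fun t _ => e2 t, Finset.prod_mul_distrib,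
        Finset.prod_ite_eq' Finset.univ t₀ (fun _ => μ),
        Finset.prod_ite_eq' Finset.univ t₁ (fun _ => μ)]
      simp
  -- first moment of the sum
  have S1 : ∑ ξ : Fin s → Fin n, (∏ t, p (ξ t)) * (∑ t, f (ξ t)) = (s : ℝ) * μ := by
    have e : ∀ ξ : Fin s → Fin n,
        (∏ t, p (ξ t)) * (∑ t, f (ξ t)) = ∑ t, (∏ t', p (ξ t')) * f (ξ t) := by
      intro ξ; rw [Finset.mul_sum]
    rw [Finset.sum_congr rfl fun ξ _ => e ξ, Finset.sum_comm]
    rw [Finset.sum_congr rfl fun t (_ : t ∈ Finset.univ) => h1 t]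
    simp [mul_comm]
  -- second moment of the sum
  have S2 : ∑ ξ : Fin s → Fin n,
      (∏ t, p (ξ t)) * ((∑ t, f (ξ t)) * (∑ t, f (ξ t)))
        = (s : ℝ) * (s : ℝ) * (μ * μ) + (s : ℝ) * (V - μ * μ) := by
    have e : ∀ ξ : Fin s → Fin n,
        (∏ t, p (ξ t)) * ((∑ t, f (ξ t)) * (∑ t, f (ξ t)))
          = ∑ t₀, ∑ t₁, (∏ t, p (ξ t)) * (f (ξ t₀) * f (ξ t₁)) := by
      intro ξ
      rw [Finset.sum_mul_sum, Finset.mul_sum]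
      exact Finset.sum_congr rfl fun t₀ _ => by rw [Finset.mul_sum]
    rw [Finset.sum_congr rfl fun ξ _ => e ξ, Finset.sum_comm]
    have e2 : ∀ t₀ : Fin s, ∀ _ : t₀ ∈ Finset.univ,
        (∑ ξ : Fin s → Fin n, ∑ t₁, (∏ t, p (ξ t)) * (f (ξ t₀) * f (ξ t₁)))
          = ∑ t₁, (if t₀ = t₁ then V else μ * μ) := by
      intro t₀ _
      rw [Finset.sum_comm]
      exact Finset.sum_congr rfl fun t₁ _ => h2 t₀ t₁
    rw [Finset.sum_congr rfl e2]
    have e3 : ∀ t₀ t₁ : Fin s,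
        (if t₀ = t₁ then V else μ * μ)
          = μ * μ + (if t₀ = t₁ then V - μ * μ else 0) := by
      intro t₀ t₁; by_cases h : t₀ = t₁ <;> simp [h]
    rw [Finset.sum_congr rfl fun t₀ _ =>
      Finset.sum_congr rfl fun t₁ _ => e3 t₀ t₁]
    simp [Finset.sum_add_distrib, Finset.sum_ite_eq, Finset.mul_sum]
    ring
  -- put everything together
  have expand : ∀ ξ : Fin s → Fin n,
      (∏ t, p (ξ t)) * ((1 / (s : ℝ)) * (∑ t, f (ξ t)) - μ) ^ 2
        = (1 / (s : ℝ)) ^ 2 * ((∏ t, p (ξ t)) * ((∑ t, f (ξ t)) * (∑ t, f (ξ t))))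
          - (2 * (1 / (s : ℝ)) * μ) * ((∏ t, p (ξ t)) * (∑ t, f (ξ t)))
          + μ ^ 2 * (∏ t, p (ξ t)) := by
    intro ξ; ring
  calc ∑ ξ : Fin s → Fin n,
          (∏ t, p (ξ t)) *
            ((1 / (s : ℝ)) * (∑ t, A (ξ t) i * B (ξ t) j / p (ξ t)) - (Aᵀ * B) i j) ^ 2
      = ∑ ξ : Fin s → Fin n,
          (∏ t, p (ξ t)) * ((1 / (s : ℝ)) * (∑ t, f (ξ t)) - μ) ^ 2 := by
        rw [hμmat]
    _ = (1 / (s : ℝ)) ^ 2 * ((s : ℝ) * (s : ℝ) * (μ * μ) + (s : ℝ) * (V - μ * μ))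
          - (2 * (1 / (s : ℝ)) * μ) * ((s : ℝ) * μ) + μ ^ 2 * 1 := by
        rw [Finset.sum_congr rfl fun ξ _ => expand ξ, Finset.sum_add_distrib,
          Finset.sum_sub_distrib, ← Finset.mul_sum, ← Finset.mul_sum, ← Finset.mul_sum,
          S1, S2, h0]
    _ = (1 / (s : ℝ)) * V - (1 / (s : ℝ)) * μ ^ 2 := by
        field_simp
        ring
    _ = (1 / (s : ℝ)) * (∑ k, A k i ^ 2 * B k j ^ 2 / p k)
          - (1 / (s : ℝ)) * ((Aᵀ * B) i j) ^ 2 := by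
        rw [hV', hμmat]
end

section
/- Let A ∈ ℝ^{n×d} with n > d and rank(A) = d, with thin SVD A = U_A Σ_A V_Aᵀ and leverage scores ℓ_i(A). Let p ∈ [0,1]^n be a probability distribution with p_i ≥ β ℓ_i(A)/d for all i and some β ∈ (0,1], and let S ∈ ℝ^{s×n} be the random row sampling and rescaling matrix obtained by importance sampling s rows according to p. If s ≥ 2d/(β δ ε), then ‖U_Aᵀ Sᵀ S b⊥‖₂² ≤ ε R²/2 holds with probability at least 1 − δ, where b⊥ is the projection of b onto the orthogonal complement of the column space of A and R² = ‖b⊥‖₂². -/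
open scoped Classical
open Matrix

/-- The sampling-and-rescaling matrix `S ∈ ℝ^{s×n}` determined by the sampled
indices `ξ_1, …, ξ_s`: `S(j,i) = 1/√(s p_i)` if `ξ j = i` and `0` otherwise. -/
noncomputable def sampleMatrix {N : Type*} [DecidableEq N] (s : ℕ) (p : N → ℝ)
    (ξ : Fin s → N) : Matrix (Fin s) N ℝ :=
  Matrix.of fun j i => if ξ j = i then (Real.sqrt (s * p i))⁻¹ else 0

lemma sum_prod_eval {s n : ℕ} (F : Fin s → Fin n → ℝ) :
    ∑ ξ : Fin s → Fin n, ∏ j, F j (ξ j) = ∏ j, ∑ i, F j i := by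
  rw [Finset.prod_univ_sum]
  simp [Fintype.piFinset_univ]

lemma exp_single {s n : ℕ} (p : Fin n → ℝ) (hp1 : ∑ i, p i = 1)
    (f : Fin n → ℝ) (j₀ : Fin s) :
    ∑ ξ : Fin s → Fin n, (∏ j, p (ξ j)) * f (ξ j₀) = ∑ i, p i * f i := by
  have h := sum_prod_eval (fun j i => p i * (if j = j₀ then f i else 1))
  calc ∑ ξ : Fin s → Fin n, (∏ j, p (ξ j)) * f (ξ j₀)
      = ∑ ξ : Fin s → Fin n, ∏ j, p (ξ j) * (if j = j₀ then f (ξ j) else 1) := by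
        refine Finset.sum_congr rfl fun ξ _ => ?_
        rw [Finset.prod_mul_distrib, Finset.prod_ite_eq' Finset.univ j₀ (fun j => f (ξ j))]
        simp
    _ = ∏ j, ∑ i, p i * (if j = j₀ then f i else 1) := h
    _ = ∏ j : Fin s, (if j = j₀ then ∑ i, p i * f i else 1) := by
        refine Finset.prod_congr rfl fun j _ => ?_
        by_cases hj : j = j₀ <;> simp [hj, hp1]
    _ = ∑ i, p i * f i := by
        rw [Finset.prod_ite_eq' Finset.univ j₀ (fun _ => ∑ i, p i * f i)]
        simp

lemma exp_pair {s n : ℕ} (p : Fin n → ℝ) (hp1 : ∑ i, p i = 1)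
    (f g : Fin n → ℝ) (j₁ j₂ : Fin s) (hne : j₁ ≠ j₂) :
    ∑ ξ : Fin s → Fin n, (∏ j, p (ξ j)) * (f (ξ j₁) * g (ξ j₂))
      = (∑ i, p i * f i) * (∑ i, p i * g i) := by
  have h := sum_prod_eval
    (fun j i => p i * (if j = j₁ then f i else 1) * (if j = j₂ then g i else 1))
  calc ∑ ξ : Fin s → Fin n, (∏ j, p (ξ j)) * (f (ξ j₁) * g (ξ j₂))
      = ∑ ξ : Fin s → Fin n,
          ∏ j, p (ξ j) * (if j = j₁ then f (ξ j) else 1) * (if j = j₂ then g (ξ j) else 1) := by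
        refine Finset.sum_congr rfl fun ξ _ => ?_
        rw [Finset.prod_mul_distrib, Finset.prod_mul_distrib,
          Finset.prod_ite_eq' Finset.univ j₁ (fun j => f (ξ j)),
          Finset.prod_ite_eq' Finset.univ j₂ (fun j => g (ξ j))]
        simp [mul_assoc]
    _ = ∏ j, ∑ i, p i * (if j = j₁ then f i else 1) * (if j = j₂ then g i else 1) := h
    _ = ∏ j : Fin s, ((if j = j₁ then ∑ i, p i * f i else 1) *
          (if j = j₂ then ∑ i, p i * g i else 1)) := by
        refine Finset.prod_congr rfl fun j _ => ?_
        by_cases h1 : j = j₁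
        · subst h1; simp [hne]
        · by_cases h2 : j = j₂ <;> simp [h1, h2, hp1, hne.symm]
    _ = (∑ i, p i * f i) * (∑ i, p i * g i) := by
        rw [Finset.prod_mul_distrib,
          Finset.prod_ite_eq' Finset.univ j₁ (fun _ => ∑ i, p i * f i),
          Finset.prod_ite_eq' Finset.univ j₂ (fun _ => ∑ i, p i * g i)]
        simp

lemma markov_fin {α : Type*} [Fintype α] (P X : α → ℝ) (hP : ∀ a, 0 ≤ P a)
    (hPs : ∑ a, P a = 1) (hX : ∀ a, 0 ≤ X a) (t δ : ℝ) (ht : 0 < t)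
    (hE : ∑ a, P a * X a ≤ δ * t) :
    1 - δ ≤ ∑ a, if X a ≤ t then P a else 0 := by
  classical
  have key : ∑ a, (if X a ≤ t then 0 else P a) ≤ δ := by
    have h1 : ∑ a, (if X a ≤ t then 0 else P a) ≤ ∑ a, P a * X a / t := by
      refine Finset.sum_le_sum fun a _ => ?_
      by_cases h : X a ≤ t
      · simp only [if_pos h]
        have := hX a
        have := hP a
        positivity
      · simp [h]
        rw [le_div_iff₀ ht]
        exact mul_le_mul_of_nonneg_left (le_of_lt (lt_of_not_ge h)) (hP a)
    have h2 : ∑ a, P a * X a / t ≤ δ := by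
      rw [← Finset.sum_div, div_le_iff₀ ht]
      exact hE
    linarith
  have split : ∑ a, (if X a ≤ t then P a else 0) + ∑ a, (if X a ≤ t then 0 else P a) = 1 := by
    rw [← Finset.sum_add_distrib, ← hPs]
    refine Finset.sum_congr rfl fun a _ => ?_
    by_cases h : X a ≤ t <;> simp [h]
  linarith

set_option maxHeartbeats 2000000 in
/-- The second structural condition holds with high probability under
leverage-score sampling: `U` is an orthonormal basis of the column space of `A` (from
the thin SVD), so the leverage scores are `ℓ_i(A) = ‖U(i,:)‖₂²`; the sampling
probabilities satisfy `p_i ≥ β ℓ_i(A)/d`; `b⊥ = b − U Uᵀ b` and `R² = ‖b⊥‖₂²`.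
If `s ≥ 2d/(β δ ε)`, then with probability at least `1 − δ` over the i.i.d. draw `ξ`
(weight `∏ j, p (ξ j)`), the sampling matrix `S` satisfies
`‖Uᵀ Sᵀ S b⊥‖₂² ≤ ε R²/2`. -/
theorem statement17 (n d : ℕ) (hnd : d < n)
    (A : Matrix (Fin n) (Fin d) ℝ) (hrank : A.rank = d)
    (U : Matrix (Fin n) (Fin d) ℝ) (hU : Uᵀ * U = 1)
    (hspan : Submodule.span ℝ (Set.range Uᵀ) = Submodule.span ℝ (Set.range Aᵀ))
    (b : Fin n → ℝ)
    (p : Fin n → ℝ) (hp0 : ∀ i, 0 ≤ p i) (hp1 : ∑ i, p i = 1)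
    (β : ℝ) (hβ : β ∈ Set.Ioc (0 : ℝ) 1)
    (hlev : ∀ i, β * (∑ j, U i j ^ 2) / (d : ℝ) ≤ p i)
    (ε δ : ℝ) (hε : 0 < ε) (hδ : 0 < δ)
    (s : ℕ) (hs : 2 * (d : ℝ) / (β * δ * ε) ≤ (s : ℝ)) :
    1 - δ ≤
      ∑ ξ : Fin s → Fin n,
        if ∑ k, ((Uᵀ * (sampleMatrix s p ξ)ᵀ * sampleMatrix s p ξ).mulVec
              (b - U.mulVec (Uᵀ.mulVec b)) k) ^ 2
            ≤ ε * (∑ i, (b i - U.mulVec (Uᵀ.mulVec b) i) ^ 2) / 2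
        then ∏ j, p (ξ j) else 0 := by
  classical
  obtain ⟨hβ0, hβ1⟩ := hβ
  set v : Fin n → ℝ := b - U.mulVec (Uᵀ.mulVec b) with hvdef
  have hvi : ∀ i, b i - U.mulVec (Uᵀ.mulVec b) i = v i := fun i => rfl
  set Rsq : ℝ := ∑ i, v i ^ 2 with hRsqdef
  have hRsq_eq : ∑ i, (b i - U.mulVec (Uᵀ.mulVec b) i) ^ 2 = Rsq := by
    simp only [hvi, hRsqdef]
  have hRsq_nonneg : 0 ≤ Rsq := Finset.sum_nonneg fun i _ => sq_nonneg _
  -- total probability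
  have hPtot : ∑ ξ : Fin s → Fin n, ∏ j, p (ξ j) = 1 := by
    rw [sum_prod_eval (fun _ i => p i)]
    simp [hp1]
  have hPnn : ∀ ξ : Fin s → Fin n, 0 ≤ ∏ j, p (ξ j) :=
    fun ξ => Finset.prod_nonneg fun j _ => hp0 _
  -- orthogonality: Uᵀ v = 0
  have hUv : ∀ k, ∑ i, U i k * v i = 0 := by
    intro k
    have h1 : Uᵀ.mulVec v = 0 := by
      rw [hvdef, Matrix.mulVec_sub, Matrix.mulVec_mulVec, Matrix.mulVec_mulVec,
        hU, Matrix.one_mul, sub_self]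
    have h2 := congrFun h1 k
    simpa [Matrix.mulVec, dotProduct, Matrix.transpose_apply] using h2
  -- zero-probability rows have zero leverage
  have hUzero : ∀ i, p i = 0 → ∀ k, U i k = 0 := by
    intro i hpi k
    have hd : (0:ℝ) < d := by
      have : 0 < d := k.pos
      exact_mod_cast this
    have hℓnn : 0 ≤ ∑ j, U i j ^ 2 := Finset.sum_nonneg fun j _ => sq_nonneg _
    have h := hlev i
    rw [hpi] at h
    have hℓ0 : ∑ j, U i j ^ 2 = 0 := by
      by_contra hne
      have hℓpos : 0 < ∑ j, U i j ^ 2 := lt_of_le_of_ne hℓnn (Ne.symm hne)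
      have : 0 < β * (∑ j, U i j ^ 2) / (d : ℝ) := by positivity
      linarith
    have := (Finset.sum_eq_zero_iff_of_nonneg (fun j _ => sq_nonneg (U i j))).mp hℓ0 k
      (Finset.mem_univ k)
    exact pow_eq_zero_iff (n := 2) (by norm_num) |>.mp this
  -- weight function
  set w : Fin n → Fin d → ℝ := fun i k => ((s:ℝ) * p i)⁻¹ * v i * U i k with hwdef
  -- rewrite the matrix expression
  have hXeq : ∀ (ξ : Fin s → Fin n) (k : Fin d),
      (Uᵀ * (sampleMatrix s p ξ)ᵀ * sampleMatrix s p ξ).mulVec v k = ∑ j, w (ξ j) k := by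
    intro ξ k
    rw [← Matrix.mulVec_mulVec, ← Matrix.mulVec_mulVec]
    simp only [Matrix.mulVec, dotProduct, sampleMatrix, Matrix.transpose_apply, Matrix.of_apply,
      ite_mul, zero_mul, Finset.sum_ite_eq, Finset.mem_univ, if_true, Finset.mul_sum,
      mul_ite, mul_zero]
    rw [Finset.sum_comm]
    refine Finset.sum_congr rfl fun j _ => ?_
    simp only [Finset.sum_ite_eq, Finset.mem_univ, if_true]
    have h : (Real.sqrt ((s:ℝ) * p (ξ j)))⁻¹ * (Real.sqrt ((s:ℝ) * p (ξ j)))⁻¹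
        = ((s:ℝ) * p (ξ j))⁻¹ := by
      rw [← mul_inv, Real.mul_self_sqrt (mul_nonneg (Nat.cast_nonneg s) (hp0 _))]
    simp only [hwdef]
    rw [← h]; ring
  set X : (Fin s → Fin n) → ℝ := fun ξ => ∑ k, (∑ j, w (ξ j) k) ^ 2 with hXdef
  have hXnn : ∀ ξ, 0 ≤ X ξ := fun ξ => Finset.sum_nonneg fun k _ => sq_nonneg _
  have hcond : ∀ ξ : Fin s → Fin n,
      (∑ k, ((Uᵀ * (sampleMatrix s p ξ)ᵀ * sampleMatrix s p ξ).mulVec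
        (b - U.mulVec (Uᵀ.mulVec b)) k) ^ 2) = X ξ := by
    intro ξ
    refine Finset.sum_congr rfl fun k _ => ?_
    rw [← hvdef, hXeq ξ k]
  -- degenerate case : Rsq = 0 or d = 0 handled by showing condition always true
  by_cases htriv : X = fun _ => (0:ℝ)
  · have : ∀ ξ : Fin s → Fin n,
        (if (∑ k, ((Uᵀ * (sampleMatrix s p ξ)ᵀ * sampleMatrix s p ξ).mulVec
              (b - U.mulVec (Uᵀ.mulVec b)) k) ^ 2)
            ≤ ε * (∑ i, (b i - U.mulVec (Uᵀ.mulVec b) i) ^ 2) / 2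
          then ∏ j, p (ξ j) else 0) = ∏ j, p (ξ j) := by
      intro ξ
      rw [if_pos]
      rw [hcond ξ, htriv, hRsq_eq]
      positivity
    rw [Finset.sum_congr rfl fun ξ _ => this ξ, hPtot]
    linarith
  · -- nondegenerate case
    have hd0 : d ≠ 0 := by
      intro hd
      apply htriv
      funext ξ
      rw [hXdef]
      subst hd
      simp
    have hdpos : (0:ℝ) < d := by
      have : 0 < d := Nat.pos_of_ne_zero hd0
      exact_mod_cast this
    have hspos : (0:ℝ) < s := by
      have h1 : (0:ℝ) < 2 * (d : ℝ) / (β * δ * ε) := by positivity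
      linarith
    have hsne : (s:ℝ) ≠ 0 := ne_of_gt hspos
    -- mean zero
    have hmean : ∀ k, ∑ i, p i * w i k = 0 := by
      intro k
      have h : ∀ i, p i * w i k = (s:ℝ)⁻¹ * (U i k * v i) := by
        intro i
        by_cases hpi : p i = 0
        · simp [hwdef, hpi, hUzero i hpi k]
        · rw [hwdef]
          field_simp
      rw [Finset.sum_congr rfl fun i _ => h i, ← Finset.mul_sum, hUv k, mul_zero]
    -- one more degenerate case: Rsq = 0
    by_cases hR : Rsq = 0
    · have hv0 : ∀ i, v i = 0 := by
        intro i
        have := (Finset.sum_eq_zero_iff_of_nonneg (fun i _ => sq_nonneg (v i))).mp hR i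
          (Finset.mem_univ i)
        exact pow_eq_zero_iff (n := 2) (by norm_num) |>.mp this
      refine absurd ?_ htriv
      funext ξ
      rw [hXdef]
      simp only
      refine Finset.sum_eq_zero fun k _ => ?_
      rw [Finset.sum_eq_zero fun j _ => by simp only [hwdef]; rw [hv0 (ξ j)]; ring]
      simp
    have hRpos : 0 < Rsq := lt_of_le_of_ne hRsq_nonneg (Ne.symm hR)
    -- expectation computation
    have hE : ∑ ξ : Fin s → Fin n, (∏ j, p (ξ j)) * X ξ
        = (s:ℝ) * ∑ i, p i * ∑ k, (w i k) ^ 2 := by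
      have step1 : ∀ ξ : Fin s → Fin n, (∏ j, p (ξ j)) * X ξ
          = ∑ k, ∑ j, ∑ j', (∏ t, p (ξ t)) * (w (ξ j) k * w (ξ j') k) := by
        intro ξ
        rw [hXdef]
        simp only
        rw [Finset.mul_sum]
        refine Finset.sum_congr rfl fun k _ => ?_
        rw [sq, Finset.sum_mul_sum, Finset.mul_sum]
        refine Finset.sum_congr rfl fun j _ => ?_
        rw [Finset.mul_sum]
      rw [Finset.sum_congr rfl fun ξ _ => step1 ξ]
      rw [Finset.sum_comm]
      have step2 : ∀ k : Fin d, ∑ ξ : Fin s → Fin n, ∑ j, ∑ j',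
          (∏ t, p (ξ t)) * (w (ξ j) k * w (ξ j') k)
          = (s:ℝ) * ∑ i, p i * (w i k) ^ 2 := by
        intro k
        rw [Finset.sum_comm]
        have inner : ∀ j : Fin s, ∑ ξ : Fin s → Fin n, ∑ j' : Fin s,
            (∏ t, p (ξ t)) * (w (ξ j) k * w (ξ j') k) = ∑ i, p i * (w i k) ^ 2 := by
          intro j
          rw [Finset.sum_comm]
          have hsplit : ∀ j' : Fin s, ∑ ξ : Fin s → Fin n,
              (∏ t, p (ξ t)) * (w (ξ j) k * w (ξ j') k)
              = if j' = j then ∑ i, p i * (w i k) ^ 2 else 0 := by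
            intro j'
            by_cases hjj : j' = j
            · subst hjj
              rw [if_pos rfl]
              have := exp_single p hp1 (fun i => w i k * w i k) j'
              simpa [sq] using this
            · rw [if_neg hjj]
              rw [exp_pair p hp1 (fun i => w i k) (fun i => w i k) j j' (Ne.symm hjj),
                hmean k, mul_zero]
          rw [Finset.sum_congr rfl fun j' _ => hsplit j']
          simp
        rw [Finset.sum_congr rfl fun j _ => inner j]
        simp [Finset.sum_const, mul_comm]
      rw [Finset.sum_congr rfl fun k _ => step2 k, ← Finset.mul_sum]
      congr 1
      rw [Finset.sum_comm]
      refine Finset.sum_congr rfl fun i _ => ?_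
      rw [Finset.mul_sum]
    -- bound the expectation
    have hbound : (s:ℝ) * ∑ i, p i * ∑ k, (w i k) ^ 2 ≤ δ * (ε * Rsq / 2) := by
      have term : ∀ i, p i * ∑ k, (w i k) ^ 2 ≤ (d:ℝ) / (β * (s:ℝ)^2) * v i ^ 2 := by
        intro i
        by_cases hpi : p i = 0
        · rw [hpi, zero_mul]
          positivity
        · have hppos : 0 < p i := lt_of_le_of_ne (hp0 i) (Ne.symm hpi)
          have hℓnn : 0 ≤ ∑ k, U i k ^ 2 := Finset.sum_nonneg fun k _ => sq_nonneg _
          have hℓ : (∑ k, U i k ^ 2) ≤ (d:ℝ) * p i / β := by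
            have h := hlev i
            rw [div_le_iff₀ hdpos] at h
            rw [le_div_iff₀ hβ0]
            nlinarith
          have hsum : ∑ k, (w i k) ^ 2
              = (((s:ℝ) * p i)⁻¹ * v i)^2 * ∑ k, U i k ^ 2 := by
            rw [Finset.mul_sum]
            refine Finset.sum_congr rfl fun k _ => ?_
            simp only [hwdef]
            ring
          rw [hsum]
          have h1 : p i * ((((s:ℝ) * p i)⁻¹ * v i)^2 * ∑ k, U i k ^ 2)
              ≤ p i * ((((s:ℝ) * p i)⁻¹ * v i)^2 * ((d:ℝ) * p i / β)) := by
            gcongr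
          have h2 : p i * ((((s:ℝ) * p i)⁻¹ * v i)^2 * ((d:ℝ) * p i / β))
              = (d:ℝ) / (β * (s:ℝ)^2) * v i ^ 2 := by
            field_simp
          linarith
      have h1 : ∑ i, p i * ∑ k, (w i k) ^ 2 ≤ (d:ℝ) / (β * (s:ℝ)^2) * Rsq := by
        rw [hRsqdef, Finset.mul_sum]
        exact Finset.sum_le_sum fun i _ => term i
      have h2 : (s:ℝ) * ((d:ℝ) / (β * (s:ℝ)^2) * Rsq) = (d:ℝ) / (β * (s:ℝ)) * Rsq := by
        field_simp
      have h3 : (d:ℝ) / (β * (s:ℝ)) ≤ δ * ε / 2 := by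
        rw [div_le_iff₀ (by positivity)]
        rw [div_le_iff₀ (by positivity)] at hs
        nlinarith
      have h4 : (d:ℝ) / (β * (s:ℝ)) * Rsq ≤ (δ * ε / 2) * Rsq :=
        mul_le_mul_of_nonneg_right h3 hRsq_nonneg
      have h5 : (s:ℝ) * ∑ i, p i * ∑ k, (w i k) ^ 2
          ≤ (s:ℝ) * ((d:ℝ) / (β * (s:ℝ)^2) * Rsq) :=
        mul_le_mul_of_nonneg_left h1 (le_of_lt hspos)
      nlinarith
    -- Markov
    have goalrw : (∑ ξ : Fin s → Fin n,
        if (∑ k, ((Uᵀ * (sampleMatrix s p ξ)ᵀ * sampleMatrix s p ξ).mulVec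
              (b - U.mulVec (Uᵀ.mulVec b)) k) ^ 2)
            ≤ ε * (∑ i, (b i - U.mulVec (Uᵀ.mulVec b) i) ^ 2) / 2
        then ∏ j, p (ξ j) else 0)
        = ∑ ξ : Fin s → Fin n, if X ξ ≤ ε * Rsq / 2 then ∏ j, p (ξ j) else 0 := by
      refine Finset.sum_congr rfl fun ξ _ => ?_
      rw [hcond ξ, hRsq_eq]
    rw [goalrw]
    exact markov_fin (fun ξ => ∏ j, p (ξ j)) X hPnn hPtot hXnn (ε * Rsq / 2) δ
      (by positivity) (le_trans (le_of_eq hE) hbound)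
end

section
/- Let p ∈ [0,1]^N be a probability distribution, let D ⊂ [N] be a set of deterministically included indices with p_det = Σ_{i∈D} p_i < 1, and let x ∈ ℝ^N with p_i > 0 whenever x_i ≠ 0. Let Ω be the hybrid sampling matrix stacking Ω_det (one row per i ∈ D, with entry 1 in column i) on top of Ω_rnd ∈ ℝ^{s×N}, where Ω_rnd draws i.i.d. indices ξ_1,…,ξ_s from the restriction of p to [N] \ D rescaled by 1/(1 − p_det), and sets Ω_rnd(j,i) = √((1 − p_det)/(s p_i)) if ξ_j = i and 0 otherwise. Then E[‖Ω x‖₂²] = ‖x‖₂². -/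
open scoped Classical
open Matrix

lemma aux_sum_prod {s : ℕ} {α : Type*} [Fintype α] (g : Fin s → α → ℝ) :
    ∑ ξ : Fin s → α, ∏ j, g j (ξ j) = ∏ j, ∑ a, g j a := by
  rw [Finset.prod_univ_sum, ← Fintype.piFinset_univ]

lemma aux_expect {s : ℕ} {α : Type*} [Fintype α] (w f : α → ℝ) (hw : ∑ a, w a = 1)
    (j0 : Fin s) :
    ∑ ξ : Fin s → α, (∏ j, w (ξ j)) * f (ξ j0) = ∑ a, w a * f a := by
  have h : ∀ ξ : Fin s → α, (∏ j, w (ξ j)) * f (ξ j0)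
      = ∏ j, (fun j a => if j = j0 then w a * f a else w a) j (ξ j) := by
    intro ξ
    rw [Fintype.prod_eq_mul_prod_compl j0 (fun j => (fun j a => if j = j0 then w a * f a else w a) j (ξ j)),
      Fintype.prod_eq_mul_prod_compl j0 (fun j => w (ξ j))]
    have : ∏ j ∈ {j0}ᶜ, (fun j a => if j = j0 then w a * f a else w a) j (ξ j)
        = ∏ j ∈ {j0}ᶜ, w (ξ j) := by
      refine Finset.prod_congr rfl fun j hj => ?_
      simp only [Finset.mem_compl, Finset.mem_singleton] at hj
      simp [hj]
    rw [this]
    simp only [if_pos rfl, if_true]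
    ring
  rw [Finset.sum_congr rfl (fun ξ _ => h ξ),
    aux_sum_prod (fun j a => if j = j0 then w a * f a else w a),
    Fintype.prod_eq_mul_prod_compl j0]
  have : ∀ j ∈ ({j0}ᶜ : Finset (Fin s)), (∑ a, (fun j a => if j = j0 then w a * f a else w a) j a) = 1 := by
    intro j hj
    simp only [Finset.mem_compl, Finset.mem_singleton] at hj
    simp [hj, hw]
  rw [Finset.prod_congr rfl this]
  simp


/-- The hybrid deterministic/random sampling matrix is unbiased.
The hybrid matrix `Ω` stacks `Ω_det` (one row per `i ∈ D`, with a `1` in column `i`)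
on top of `Ω_rnd ∈ ℝ^{s×N}`, where `Ω_rnd` is built from i.i.d. indices
`ξ_1,…,ξ_s` drawn from the restriction of `p` to `[N] \ D` rescaled by
`1/(1 − p_det)` (so index `i ∉ D` has probability `p_i/(1 − p_det)` and indices in
`D` have probability `0`), with `Ω_rnd(j,i) = √((1 − p_det)/(s p_i))` if `ξ j = i`
and `0` otherwise.  Writing out the expectation over `ξ` as a finite sum:
`E[‖Ω x‖₂²] = ‖x‖₂²`. -/
theorem statement18 (N s : ℕ) (hs : 0 < s)
    (p : Fin N → ℝ) (hp0 : ∀ i, 0 ≤ p i) (hp1 : ∑ i, p i = 1)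
    (D : Finset (Fin N)) (hpdet : ∑ i ∈ D, p i < 1)
    (x : Fin N → ℝ) (hx : ∀ i, x i ≠ 0 → 0 < p i) :
    ∑ ξ : Fin s → Fin N,
        (∏ j, if ξ j ∈ D then (0 : ℝ) else p (ξ j) / (1 - ∑ i ∈ D, p i)) *
          ∑ row : {i // i ∈ D} ⊕ Fin s,
            ((Matrix.of fun (row : {i // i ∈ D} ⊕ Fin s) (i : Fin N) =>
                Sum.elim
                  (fun k : {i // i ∈ D} => if (k : Fin N) = i then (1 : ℝ) else 0)
                  (fun j : Fin s =>
                    if ξ j = i then Real.sqrt ((1 - ∑ i' ∈ D, p i') / (s * p i)) else 0)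
                  row).mulVec x row) ^ 2
      = ∑ i, x i ^ 2 := by

  set pd := ∑ i ∈ D, p i with hpd
  have hne : (1:ℝ) - pd ≠ 0 := by linarith
  have hsne : (s:ℝ) ≠ 0 := Nat.cast_ne_zero.2 hs.ne'
  set w : Fin N → ℝ := fun i => if i ∈ D then 0 else p i / (1 - pd) with hw
  set f : Fin N → ℝ := fun i => (1 - pd) / (s * p i) * x i ^ 2 with hf
  have hcompl : ∑ a ∈ Dᶜ, p a = 1 - pd := by
    have := Finset.sum_add_sum_compl D p
    rw [hp1] at this; linarith
  have hwsum : ∑ a, w a = 1 := by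
    have h2 : ∑ a, w a = ∑ a ∈ Dᶜ, w a := by
      refine (Finset.sum_subset (Finset.subset_univ _) fun a _ ha => ?_).symm
      simp only [Finset.mem_compl, not_not] at ha
      simp [hw, ha]
    rw [h2]
    have h3 : ∑ a ∈ Dᶜ, w a = ∑ a ∈ Dᶜ, p a / (1 - pd) := by
      refine Finset.sum_congr rfl fun a ha => ?_
      simp only [Finset.mem_compl] at ha
      simp [hw, ha]
    rw [h3, ← Finset.sum_div, hcompl, div_self hne]
  have hinner : ∀ ξ : Fin s → Fin N,
      (∑ row : {i // i ∈ D} ⊕ Fin s,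
        ((Matrix.of fun (row : {i // i ∈ D} ⊕ Fin s) (i : Fin N) =>
            Sum.elim
              (fun k : {i // i ∈ D} => if (k : Fin N) = i then (1 : ℝ) else 0)
              (fun j : Fin s =>
                if ξ j = i then Real.sqrt ((1 - pd) / (s * p i)) else 0)
              row).mulVec x row) ^ 2)
      = (∑ k ∈ D, x k ^ 2) + ∑ j, f (ξ j) := by
    intro ξ
    rw [Fintype.sum_sum_type]
    congr 1
    · have h1 : ∀ k : {i // i ∈ D},
          ((Matrix.of fun (row : {i // i ∈ D} ⊕ Fin s) (i : Fin N) =>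
            Sum.elim
              (fun k : {i // i ∈ D} => if (k : Fin N) = i then (1 : ℝ) else 0)
              (fun j : Fin s =>
                if ξ j = i then Real.sqrt ((1 - pd) / (s * p i)) else 0)
              row).mulVec x (Sum.inl k)) = x k := by
        intro k
        simp [Matrix.mulVec, dotProduct, ite_mul]
      simp only [h1]
      exact Finset.sum_coe_sort D (fun k => x k ^ 2)
    · refine Finset.sum_congr rfl fun j _ => ?_
      have h2 : ((Matrix.of fun (row : {i // i ∈ D} ⊕ Fin s) (i : Fin N) =>
            Sum.elim
              (fun k : {i // i ∈ D} => if (k : Fin N) = i then (1 : ℝ) else 0)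
              (fun j : Fin s =>
                if ξ j = i then Real.sqrt ((1 - pd) / (s * p i)) else 0)
              row).mulVec x (Sum.inr j))
          = Real.sqrt ((1 - pd) / (s * p (ξ j))) * x (ξ j) := by
        simp [Matrix.mulVec, dotProduct, ite_mul]
      rw [h2, mul_pow, Real.sq_sqrt, hf]
      exact div_nonneg (by linarith) (mul_nonneg (Nat.cast_nonneg s) (hp0 _))
  calc ∑ ξ : Fin s → Fin N, (∏ j, w (ξ j)) *
          ∑ row : {i // i ∈ D} ⊕ Fin s,
            ((Matrix.of fun (row : {i // i ∈ D} ⊕ Fin s) (i : Fin N) =>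
                Sum.elim
                  (fun k : {i // i ∈ D} => if (k : Fin N) = i then (1 : ℝ) else 0)
                  (fun j : Fin s =>
                    if ξ j = i then Real.sqrt ((1 - pd) / (s * p i)) else 0)
                  row).mulVec x row) ^ 2
      = ∑ ξ : Fin s → Fin N, ((∏ j, w (ξ j)) * (∑ k ∈ D, x k ^ 2)
          + ∑ j, (∏ j', w (ξ j')) * f (ξ j)) := by
        refine Finset.sum_congr rfl fun ξ _ => ?_
        rw [hinner ξ, mul_add, Finset.mul_sum, Finset.mul_sum]
    _ = (∑ k ∈ D, x k ^ 2) * (∑ ξ : Fin s → Fin N, ∏ j, w (ξ j))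
          + ∑ j : Fin s, ∑ ξ : Fin s → Fin N, (∏ j', w (ξ j')) * f (ξ j) := by
        rw [Finset.sum_add_distrib, Finset.sum_comm, ← Finset.sum_mul, mul_comm]
    _ = (∑ k ∈ D, x k ^ 2) + ∑ j : Fin s, ∑ a, w a * f a := by
        rw [aux_sum_prod (fun _ a => w a)]
        simp only [hwsum, Finset.prod_const_one, mul_one]
        congr 1
        exact Finset.sum_congr rfl fun j _ => aux_expect w f hwsum j
    _ = ∑ i, x i ^ 2 := by
        have hwf : ∀ a, w a * f a = (if a ∈ D then 0 else x a ^ 2) / s := by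
          intro a
          by_cases ha : a ∈ D
          · simp [hw, ha]
          · simp only [hw, hf, if_neg ha]
            by_cases hxa : x a = 0
            · simp [hxa]
            · have hpa : p a ≠ 0 := (hx a hxa).ne'
              field_simp
        simp only [hwf]
        rw [Finset.sum_const, nsmul_eq_mul, Finset.card_univ, Fintype.card_fin,
          ← Finset.sum_div, mul_div_cancel₀ _ hsne]
        have : (∑ a, if a ∈ D then (0:ℝ) else x a ^ 2) = ∑ a ∈ Dᶜ, x a ^ 2 := by
          rw [(Finset.sum_subset (Finset.subset_univ Dᶜ) fun a _ ha => by
            simp only [Finset.mem_compl, not_not] at ha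
            simp [ha] : ∑ a ∈ Dᶜ, (if a ∈ D then (0:ℝ) else x a ^ 2)
              = ∑ a, if a ∈ D then (0:ℝ) else x a ^ 2).symm]
          refine Finset.sum_congr rfl fun a ha => ?_
          simp only [Finset.mem_compl] at ha
          simp [ha]
        rw [this, Finset.sum_add_sum_compl D]
end
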